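/- arXiv:2201.06475 — 7 statements merged into one kernel-verified Lean document; each statement's English description precedes it below -/
import Mathlib

section
/- For every n ≥ 1 and every coloring c : Fin n × Fin n → Option Bool of the n×n Hex board, it is not the case that both Red wins c and Blue wins c. -/
/-- Hex adjacency on the integer grid: `p` and `q` are adjacent iff
`q - p ∈ {(1,0), (-1,0), (0,1), (0,-1), (1,1), (-1,-1)}`. -/
def HexAdj (p q : ℤ × ℤ) : Prop :=
  q - p ∈ ({(1, 0), (-1, 0), (0, 1), (0, -1), (1, 1), (-1, -1)} : Set (ℤ × ℤ))

/-- The integer coordinates of a cell of the `n × n` board. -/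
def finCell {n : ℕ} (p : Fin n × Fin n) : ℤ × ℤ := ((p.1 : ℤ), (p.2 : ℤ))

/-- Red wins a (partial) coloring of the `n × n` Hex board: there is a finite sequence of
cells, consecutive ones adjacent, all colored `some true`, whose first cell has first
coordinate `0` and whose last cell has first coordinate `n - 1`. -/
def RedWinsFin {n : ℕ} (c : Fin n × Fin n → Option Bool) : Prop :=
  ∃ k : ℕ, ∃ f : Fin (k + 1) → Fin n × Fin n,
    (∀ i : Fin k, HexAdj (finCell (f i.castSucc)) (finCell (f i.succ))) ∧
    (∀ i, c (f i) = some true) ∧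
    ((f 0).1 : ℕ) = 0 ∧ ((f (Fin.last k)).1 : ℕ) = n - 1

/-- Blue wins a (partial) coloring of the `n × n` Hex board: there is a finite sequence of
cells, consecutive ones adjacent, all colored `some false`, whose first cell has second
coordinate `0` and whose last cell has second coordinate `n - 1`. -/
def BlueWinsFin {n : ℕ} (c : Fin n × Fin n → Option Bool) : Prop :=
  ∃ k : ℕ, ∃ f : Fin (k + 1) → Fin n × Fin n,
    (∀ i : Fin k, HexAdj (finCell (f i.castSucc)) (finCell (f i.succ))) ∧
    (∀ i, c (f i) = some false) ∧
    ((f 0).2 : ℕ) = 0 ∧ ((f (Fin.last k)).2 : ℕ) = n - 1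

/-
For a cell `z`, count with sign how often a path of cells crosses the vertical ray
`{z.1 + 1/2} × (-∞, z.2)`. If `u → v` is a step avoiding the path, the counts at `u` and `v`
differ by the net flow of the path into the region enclosed by the two rays; this vanishes when
the path starts and ends outside that region. Extend a winning red path by one cell past the last
column. Along a blue path the count is then constant, yet it is `0` at the first blue cell, whose
ray lies below the whole board, and `1` at the last one, whose ray the red path passes from left
to right.
-/

namespace HexAdj

lemma symm {p q : ℤ × ℤ} (h : HexAdj p q) : HexAdj q p := by
  simp only [HexAdj, Set.mem_insert_iff, Set.mem_singleton_iff, Prod.ext_iff,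
    Prod.fst_sub, Prod.snd_sub] at h ⊢
  omega

end HexAdj

lemma Fin.sum_univ_succ_sub_castSucc {M : Type*} [AddCommGroup M] {k : ℕ}
    (f : Fin (k + 1) → M) :
    ∑ i : Fin k, (f i.succ - f i.castSucc) = f (Fin.last k) - f 0 := by
  induction k with
  | zero => simp
  | succ k ih =>
    simp only [Fin.sum_univ_castSucc, Fin.succ_castSucc, ih fun i => f i.castSucc,
      Fin.succ_last, Fin.castSucc_zero]
    abel

namespace Hex

def PosStep (u v : ℤ × ℤ) : Prop :=
  v - u ∈ ({(1, 0), (0, 1), (1, 1)} : Set (ℤ × ℤ))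

lemma posStep_or_posStep_of_hexAdj {u v : ℤ × ℤ} (h : HexAdj u v) :
    PosStep u v ∨ PosStep v u := by
  simp only [HexAdj, PosStep, Set.mem_insert_iff, Set.mem_singleton_iff, Prod.ext_iff,
    Prod.fst_sub, Prod.snd_sub] at h ⊢
  omega

/-- `a → b` crosses, from left to right, the vertical ray `{z.1 + 1/2} × (-∞, z.2)`. -/
def CrossesRight (a b z : ℤ × ℤ) : Prop :=
  a.1 = z.1 ∧ b.1 = z.1 + 1 ∧ a.2 < z.2

instance (a b z : ℤ × ℤ) : Decidable (CrossesRight a b z) := by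
  unfold CrossesRight; infer_instance

def crossing (a b z : ℤ × ℤ) : ℤ :=
  (if CrossesRight a b z then 1 else 0) - (if CrossesRight b a z then 1 else 0)

/-- Indicator of the cells enclosed by the rays below `u` and below `v` and the step `u → v`. -/
def between (u v w : ℤ × ℤ) : ℤ :=
  if u.1 < v.1 ∧ w.1 = v.1 ∧ w.2 ≤ u.2 then 1 else 0

def rightOf (z w : ℤ × ℤ) : ℤ :=
  if z.1 < w.1 then 1 else 0

lemma crossing_sub_crossing_of_posStep {a b u v : ℤ × ℤ} (hab : HexAdj a b)
    (huv : PosStep u v) (hau : a ≠ u) (hav : a ≠ v) (hbu : b ≠ u) (hbv : b ≠ v) :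
    crossing a b u - crossing a b v = between u v b - between u v a := by
  obtain ⟨a₁, a₂⟩ := a; obtain ⟨b₁, b₂⟩ := b; obtain ⟨u₁, u₂⟩ := u; obtain ⟨v₁, v₂⟩ := v
  simp only [HexAdj, PosStep, Set.mem_insert_iff, Set.mem_singleton_iff, Prod.mk_sub_mk,
    Prod.mk.injEq] at hab huv
  simp only [Ne, Prod.mk.injEq] at hau hav hbu hbv
  unfold crossing between CrossesRight
  grind (splits := 40)

lemma crossing_eq_rightOf_sub_rightOf {a b z : ℤ × ℤ} (hab : HexAdj a b) (ha : a ≠ z)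
    (hb : b ≠ z) (ha₂ : a.2 ≤ z.2) (hb₂ : b.2 ≤ z.2) :
    crossing a b z = rightOf z b - rightOf z a := by
  obtain ⟨a₁, a₂⟩ := a; obtain ⟨b₁, b₂⟩ := b; obtain ⟨z₁, z₂⟩ := z
  simp only [HexAdj, Set.mem_insert_iff, Set.mem_singleton_iff, Prod.mk_sub_mk,
    Prod.mk.injEq] at hab
  simp only [Ne, Prod.mk.injEq] at ha hb
  unfold crossing rightOf CrossesRight
  grind (splits := 20)

lemma crossing_eq_zero_of_ge {a b z : ℤ × ℤ} (ha : z.2 ≤ a.2) (hb : z.2 ≤ b.2) :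
    crossing a b z = 0 := by
  unfold crossing CrossesRight
  split_ifs <;> omega

def IsHexPath {k : ℕ} (P : Fin (k + 1) → ℤ × ℤ) : Prop :=
  ∀ i : Fin k, HexAdj (P i.castSucc) (P i.succ)

def crossingNumber {k : ℕ} (P : Fin (k + 1) → ℤ × ℤ) (z : ℤ × ℤ) : ℤ :=
  ∑ i : Fin k, crossing (P i.castSucc) (P i.succ) z

section

variable {k : ℕ} {P : Fin (k + 1) → ℤ × ℤ}

lemma IsHexPath.snoc (hP : IsHexPath P) {a : ℤ × ℤ} (ha : HexAdj (P (Fin.last k)) a) :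
    IsHexPath (Fin.snoc P a : Fin (k + 2) → ℤ × ℤ) := by
  intro i
  cases i using Fin.lastCases with
  | last => simpa using ha
  | cast i => simpa only [Fin.succ_castSucc, Fin.snoc_castSucc] using hP i

lemma crossingNumber_eq_of_posStep (hP : IsHexPath P) {u v : ℤ × ℤ} (huv : PosStep u v)
    (hu : ∀ i, P i ≠ u) (hv : ∀ i, P i ≠ v) (h₀ : (P 0).1 ≤ u.1)
    (hk : v.1 < (P (Fin.last k)).1) :
    crossingNumber P u = crossingNumber P v := by
  have hedge (i : Fin k) :
      crossing (P i.castSucc) (P i.succ) u - crossing (P i.castSucc) (P i.succ) v =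
        between u v (P i.succ) - between u v (P i.castSucc) :=
    crossing_sub_crossing_of_posStep (hP i) huv (hu _) (hv _) (hu _) (hv _)
  have hends : between u v (P (Fin.last k)) = between u v (P 0) := by
    unfold between; grind
  rw [← sub_eq_zero, crossingNumber, crossingNumber, ← Finset.sum_sub_distrib,
    Finset.sum_congr rfl fun i _ => hedge i,
    Fin.sum_univ_succ_sub_castSucc fun i => between u v (P i), hends, sub_self]

lemma crossingNumber_eq_of_hexAdj (hP : IsHexPath P) {u v : ℤ × ℤ} (huv : HexAdj u v)
    (hu : ∀ i, P i ≠ u) (hv : ∀ i, P i ≠ v) (hu₁ : u.1 ∈ Set.Ico (P 0).1 (P (Fin.last k)).1)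
    (hv₁ : v.1 ∈ Set.Ico (P 0).1 (P (Fin.last k)).1) :
    crossingNumber P u = crossingNumber P v := by
  rcases posStep_or_posStep_of_hexAdj huv with h | h
  · exact crossingNumber_eq_of_posStep hP h hu hv hu₁.1 hv₁.2
  · exact (crossingNumber_eq_of_posStep hP h hv hu hv₁.1 hu₁.2).symm

lemma crossingNumber_eq_zero_of_forall_le {z : ℤ × ℤ} (hz : ∀ i, z.2 ≤ (P i).2) :
    crossingNumber P z = 0 :=
  Finset.sum_eq_zero fun _ _ => crossing_eq_zero_of_ge (hz _) (hz _)

lemma crossingNumber_eq_one (hP : IsHexPath P) {z : ℤ × ℤ} (hz : ∀ i, P i ≠ z)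
    (hz₂ : ∀ i, (P i).2 ≤ z.2) (h₀ : (P 0).1 ≤ z.1) (hk : z.1 < (P (Fin.last k)).1) :
    crossingNumber P z = 1 := by
  rw [crossingNumber, Finset.sum_congr rfl fun i _ =>
    crossing_eq_rightOf_sub_rightOf (hP i) (hz _) (hz _) (hz₂ _) (hz₂ _),
    Fin.sum_univ_succ_sub_castSucc fun i => rightOf z (P i)]
  simp [rightOf, hk, h₀]

lemma crossingNumber_eq_of_isHexPath (hP : IsHexPath P) {m : ℕ} {Q : Fin (m + 1) → ℤ × ℤ}
    (hQ : IsHexPath Q) (hPQ : ∀ i j, P i ≠ Q j)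
    (hQ₁ : ∀ j, (Q j).1 ∈ Set.Ico (P 0).1 (P (Fin.last k)).1) (j : Fin (m + 1)) :
    crossingNumber P (Q j) = crossingNumber P (Q 0) := by
  induction j using Fin.induction with
  | zero => rfl
  | succ j ih =>
    rw [← ih]
    exact crossingNumber_eq_of_hexAdj hP (hQ j).symm (hPQ · _) (hPQ · _) (hQ₁ _) (hQ₁ _)

theorem IsHexPath.exists_eq_of_spanning (hP : IsHexPath P) {m : ℕ} {Q : Fin (m + 1) → ℤ × ℤ}
    (hQ : IsHexPath Q) (hQ₁ : ∀ j, (Q j).1 ∈ Set.Ico (P 0).1 (P (Fin.last k)).1)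
    (hQ₀ : ∀ i, (Q 0).2 ≤ (P i).2) (hQₘ : ∀ i, (P i).2 ≤ (Q (Fin.last m)).2) :
    ∃ i j, P i = Q j := by
  by_contra! hPQ
  have h₀ : crossingNumber P (Q 0) = 0 := crossingNumber_eq_zero_of_forall_le hQ₀
  have h₁ : crossingNumber P (Q (Fin.last m)) = 1 :=
    crossingNumber_eq_one hP (hPQ · _) hQₘ (hQ₁ _).1 (hQ₁ _).2
  have := crossingNumber_eq_of_isHexPath hP hQ hPQ hQ₁ (Fin.last m)
  omega

end

end Hex

lemma finCell_injective {n : ℕ} : Function.Injective (finCell (n := n)) := by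
  intro p q h
  simp only [finCell, Prod.mk.injEq, Nat.cast_inj, Fin.val_inj] at h
  exact Prod.ext h.1 h.2

theorem finite_hex_at_most_one_winner_general (n : ℕ)
    (c : Fin n × Fin n → Option Bool) :
    ¬ (RedWinsFin c ∧ BlueWinsFin c) := by
  rintro ⟨⟨k, f, hf, hred, hf₀, hfk⟩, ⟨m, g, hg, hblue, hg₀, hgm⟩⟩
  set P : Fin (k + 2) → ℤ × ℤ := Fin.snoc (finCell ∘ f) ((n : ℤ), ((f (Fin.last k)).2 : ℤ))
  have hP : Hex.IsHexPath P := Hex.IsHexPath.snoc (P := finCell ∘ f) hf <| by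
    refine Or.inl (Prod.ext ?_ (sub_self _))
    simp only [Function.comp_apply, finCell, Prod.fst_sub]
    omega
  have hP₂ (i : Fin (k + 2)) : 0 ≤ (P i).2 ∧ (P i).2 < n := by
    cases i using Fin.lastCases <;> simp [P, finCell]
  have hQ₁ (j : Fin (m + 1)) : (finCell (g j)).1 ∈ Set.Ico (P 0).1 (P (Fin.last _)).1 := by
    simp [P, finCell, hf₀]
  have hQ₀ (i : Fin (k + 2)) : (finCell (g 0)).2 ≤ (P i).2 := by simp [finCell, hg₀, (hP₂ i).1]
  have hQₘ (i : Fin (k + 2)) : (P i).2 ≤ (finCell (g (Fin.last m))).2 := by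
    have := hP₂ i; simp only [finCell, hgm]; omega
  obtain ⟨i, j, hij⟩ := hP.exists_eq_of_spanning (Q := finCell ∘ g) hg hQ₁ hQ₀ hQₘ
  cases i using Fin.lastCases with
  | last =>
    simp only [P, Fin.snoc_last, Function.comp_apply, finCell, Prod.mk.injEq] at hij
    omega
  | cast i =>
    have hfg : f i = g j := finCell_injective (by simpa [P] using hij)
    simpa [hfg, hblue] using hred i

/-- At most one player wins any coloring of the `n × n` Hex board. -/
theorem finite_hex_at_most_one_winner (n : ℕ) (hn : 1 ≤ n)
    (c : Fin n × Fin n → Option Bool) :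
    ¬ (RedWinsFin c ∧ BlueWinsFin c) :=
  finite_hex_at_most_one_winner_general n c
end

section
/- For every n ≥ 1 and every total coloring χ : Fin n × Fin n → Bool of the n×n Hex board, at least one of the two players wins: either Red wins the induced coloring or Blue wins it (hence, combined with uniqueness, exactly one player wins). -/
/-!
Hex is reduced to the game of Y. In every two-coloring of the triangular board
`{0 ≤ y ≤ x ≤ m}` one color has a connected set meeting all three sides; this follows by
induction on `m`, coloring each cell `z` of the smaller triangle by the majority color of the
three cells `z`, `z + (1,0)`, `z + (1,1)`: monochromatic connections lift from the majority
coloring back to the original one. The `n × n` board is placed in the triangle of side `2n - 1`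
as the rhombus against its right side, and the rest of the triangle is colored red to the left
of the board and blue above it. A red Y-set then has to cross the board from its left edge to
its right edge, and a blue one from its bottom edge to its top edge.
-/

open Relation Set

namespace Relation

variable {α β : Type*}

def Restrict (r : α → α → Prop) (s : Set α) (x y : α) : Prop := r x y ∧ x ∈ s ∧ y ∈ s

instance {r : α → α → Prop} [Std.Symm r] {s : Set α} : Std.Symm (Restrict r s) where
  symm _ _ h := ⟨Std.Symm.symm _ _ h.1, h.2.2, h.2.1⟩

variable {r : α → α → Prop} {s : Set α} {a b : α}

theorem ReflGen.reflTransGen_restrict (h : ReflGen r a b) (ha : a ∈ s) (hb : b ∈ s) :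
    ReflTransGen (Restrict r s) a b := by
  cases h with
  | refl => exact .refl
  | single h => exact .single ⟨h, ha, hb⟩

theorem ReflTransGen.mem_of_restrict (h : ReflTransGen (Restrict r s) a b) (ha : a ∈ s) :
    b ∈ s := by
  rcases h.cases_tail with rfl | ⟨c, -, hcb⟩
  exacts [ha, hcb.2.2]

theorem ReflTransGen.exists_fin_chain (h : ReflTransGen r a b) :
    ∃ k, ∃ f : Fin (k + 1) → α, f 0 = a ∧ f (Fin.last k) = b ∧
      ∀ i : Fin k, r (f i.castSucc) (f i.succ) := by
  induction h with
  | refl => exact ⟨0, fun _ => a, rfl, rfl, Fin.elim0⟩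
  | @tail c d _ hcd ih =>
    obtain ⟨k, f, hf0, hfk, hf⟩ := ih
    refine ⟨k + 1, Fin.snoc f d, by simpa using hf0, by simp, fun i => ?_⟩
    rcases Fin.eq_castSucc_or_eq_last i with ⟨j, rfl⟩ | rfl
    · rw [Fin.succ_castSucc, Fin.snoc_castSucc, Fin.snoc_castSucc]
      exact hf j
    · simpa [hfk] using hcd

theorem ReflTransGen.exists_fin_chain_restrict (h : ReflTransGen (Restrict r s) a b)
    (ha : a ∈ s) :
    ∃ k, ∃ f : Fin (k + 1) → α, f 0 = a ∧ f (Fin.last k) = b ∧ (∀ i, f i ∈ s) ∧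
      ∀ i : Fin k, r (f i.castSucc) (f i.succ) := by
  obtain ⟨k, f, hf0, hfk, hf⟩ := h.exists_fin_chain
  refine ⟨k, f, hf0, hfk, fun i => ?_, fun i => (hf i).1⟩
  induction i using Fin.cases with
  | zero => exact hf0 ▸ ha
  | succ j => exact (hf j).2.2

theorem ReflTransGen.exists_lift_until_exit {e : β → α} {a : β} {z : α}
    (h : ReflTransGen r (e a) z) :
    ∃ q, ReflTransGen (fun p q => r (e p) (e q)) a q ∧ (e q = z ∨ ∃ y ∉ range e, r (e q) y) := by
  induction h with
  | refl => exact ⟨a, .refl, .inl rfl⟩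
  | @tail y z _ hyz ih =>
    obtain ⟨q, hq, rfl | hexit⟩ := ih
    · by_cases hz : z ∈ range e
      · obtain ⟨q', rfl⟩ := hz
        exact ⟨q', hq.tail hyz, .inl rfl⟩
      · exact ⟨q, hq, .inr ⟨z, hz, hyz⟩⟩
    · exact ⟨q, hq, .inr hexit⟩

theorem ReflTransGen.exists_lift_to_level {e : β → α} {g : α → ℤ} {c₀ : ℤ}
    (hg : ∀ x y, r x y → g x ≤ g y + 1) (hout : ∀ x y, r x y → y ∉ range e → g y < c₀)
    (hin : ∀ p, c₀ ≤ g (e p)) {a : β} {z : α} (h : ReflTransGen r (e a) z)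
    (hz : z ∈ range e → g z ≤ c₀) :
    ∃ q, g (e q) = c₀ ∧ ReflTransGen (fun p q => r (e p) (e q)) a q := by
  obtain ⟨q, hq, rfl | ⟨y, hy, hqy⟩⟩ := h.exists_lift_until_exit
  · exact ⟨q, le_antisymm (hz ⟨q, rfl⟩) (hin q), hq⟩
  · have := hg _ _ hqy
    have := hout _ _ hqy hy
    exact ⟨q, le_antisymm (by omega) (hin q), hq⟩

end Relation

theorem hexAdj_iff {p q : ℤ × ℤ} : HexAdj p q ↔
    (q.1 = p.1 + 1 ∧ q.2 = p.2) ∨ (q.1 = p.1 - 1 ∧ q.2 = p.2) ∨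
    (q.1 = p.1 ∧ q.2 = p.2 + 1) ∨ (q.1 = p.1 ∧ q.2 = p.2 - 1) ∨
    (q.1 = p.1 + 1 ∧ q.2 = p.2 + 1) ∨ (q.1 = p.1 - 1 ∧ q.2 = p.2 - 1) := by
  simp only [HexAdj, Set.mem_insert_iff, Set.mem_singleton_iff, Prod.ext_iff, Prod.fst_sub,
    Prod.snd_sub]
  omega

instance : Std.Symm HexAdj where
  symm _ _ h := by
    rw [hexAdj_iff] at h ⊢
    omega

theorem hexAdj_add_right_iff (p q t : ℤ × ℤ) : HexAdj (p + t) (q + t) ↔ HexAdj p q := by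
  simp only [HexAdj, add_sub_add_right_eq_sub]

theorem HexAdj.fst_le {p q : ℤ × ℤ} (h : HexAdj p q) : p.1 ≤ q.1 + 1 := by
  rw [hexAdj_iff] at h
  omega

theorem HexAdj.snd_le {p q : ℤ × ℤ} (h : HexAdj p q) : q.2 ≤ p.2 + 1 := by
  rw [hexAdj_iff] at h
  omega

def hexDirs : List (ℤ × ℤ) := [(1, 0), (-1, 0), (0, 1), (0, -1), (1, 1), (-1, -1)]

def hexNear : Finset (ℤ × ℤ) := {0, (1, 0), (-1, 0), (0, 1), (0, -1), (1, 1), (-1, -1)}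

theorem reflGen_hexAdj_iff {p q : ℤ × ℤ} : ReflGen HexAdj p q ↔ q - p ∈ hexNear := by
  rw [reflGen_iff, HexAdj, ← sub_eq_zero]
  simp [hexNear]

def triangle (m : ℕ) : Set (ℤ × ℤ) := {z | 0 ≤ z.2 ∧ z.2 ≤ z.1 ∧ z.1 ≤ m}

def coloredTriangle (m : ℕ) (c : ℤ × ℤ → Bool) (b : Bool) : Set (ℤ × ℤ) :=
  {z | z ∈ triangle m ∧ c z = b}

def triOffset : Fin 3 → ℤ × ℤ := ![0, (1, 0), (1, 1)]

def maj3 (x : Fin 3 → Bool) : Bool := (x 0 && x 1) || (x 0 && x 2) || (x 1 && x 2)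

def majorityReduce (c : ℤ × ℤ → Bool) (z : ℤ × ℤ) : Bool := maj3 fun i => c (z + triOffset i)

theorem add_triOffset_mem_triangle {m : ℕ} {z : ℤ × ℤ} (hz : z ∈ triangle m) (i : Fin 3) :
    z + triOffset i ∈ triangle (m + 1) := by
  obtain ⟨h1, h2, h3⟩ := hz
  fin_cases i <;> simp [triangle, triOffset] <;> omega

theorem reflGen_hexAdj_add_triOffset (z : ℤ × ℤ) (i j : Fin 3) :
    ReflGen HexAdj (z + triOffset i) (z + triOffset j) := by
  rw [reflGen_hexAdj_iff, add_sub_add_left_eq_sub]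
  revert i j
  decide

theorem exists_reflGen_hexAdj_add_triOffset {z z' : ℤ × ℤ} (h : HexAdj z z')
    {i i' j j' : Fin 3} (hi : i ≠ i') (hj : j ≠ j') :
    ∃ a, (a = i ∨ a = i') ∧ ∃ a', (a' = j ∨ a' = j') ∧
      ReflGen HexAdj (z + triOffset a) (z' + triOffset a') := by
  have key : ∀ d ∈ hexDirs,
      ∀ i i' j j' : Fin 3, i ≠ i' → j ≠ j' → ∃ a, (a = i ∨ a = i') ∧ ∃ a', (a' = j ∨ a' = j') ∧
        d + triOffset a' - triOffset a ∈ hexNear := by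
    decide
  have hd : z' - z ∈ hexDirs := by simpa [HexAdj, hexDirs] using h
  have hsub (a a' : Fin 3) : z' + triOffset a' - (z + triOffset a) =
      z' - z + triOffset a' - triOffset a := by abel
  simp only [reflGen_hexAdj_iff, hsub]
  exact key _ hd i i' j j' hi hj

theorem exists_ne_eq_majorityReduce (c : ℤ × ℤ → Bool) (z : ℤ × ℤ) :
    ∃ i j, i ≠ j ∧ ∀ a, (a = i ∨ a = j) → c (z + triOffset a) = majorityReduce c z :=
  (by decide : ∀ x : Fin 3 → Bool, ∃ i j, i ≠ j ∧ ∀ a, (a = i ∨ a = j) → x a = maj3 x) _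

theorem exists_eq_majorityReduce_of_ne (c : ℤ × ℤ → Bool) (z : ℤ × ℤ) {k l : Fin 3}
    (hkl : k ≠ l) : ∃ a, (a = k ∨ a = l) ∧ c (z + triOffset a) = majorityReduce c z :=
  (by decide : ∀ x : Fin 3 → Bool, ∀ k l : Fin 3, k ≠ l → ∃ a, (a = k ∨ a = l) ∧ x a = maj3 x)
    _ k l hkl

theorem reflTransGen_of_majorityReduce {m : ℕ} {c : ℤ × ℤ → Bool} {b : Bool} {z z' : ℤ × ℤ}
    (h : ReflTransGen (Restrict HexAdj (coloredTriangle m (majorityReduce c) b)) z z')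
    (hz : z ∈ coloredTriangle m (majorityReduce c) b) {i j : Fin 3}
    (hi : c (z + triOffset i) = b) (hj : c (z' + triOffset j) = b) :
    ReflTransGen (Restrict HexAdj (coloredTriangle (m + 1) c b))
      (z + triOffset i) (z' + triOffset j) := by
  have near {y y' : ℤ × ℤ} (hy : y ∈ triangle m) (hy' : y' ∈ triangle m) {k k' : Fin 3}
      (hk : c (y + triOffset k) = b) (hk' : c (y' + triOffset k') = b)
      (hyy' : ReflGen HexAdj (y + triOffset k) (y' + triOffset k')) :
      ReflTransGen (Restrict HexAdj (coloredTriangle (m + 1) c b))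
        (y + triOffset k) (y' + triOffset k') :=
    hyy'.reflTransGen_restrict ⟨add_triOffset_mem_triangle hy k, hk⟩
      ⟨add_triOffset_mem_triangle hy' k', hk'⟩
  induction h generalizing j with
  | refl => exact near hz.1 hz.1 hi hj (reflGen_hexAdj_add_triOffset z i j)
  | @tail y y' _ hyy' ih =>
    obtain ⟨hadj, hy, hy'⟩ := hyy'
    obtain ⟨k, k', hkk', hk⟩ := exists_ne_eq_majorityReduce c y
    obtain ⟨l, l', hll', hl⟩ := exists_ne_eq_majorityReduce c y'
    obtain ⟨a, ha, a', ha', hnear⟩ := exists_reflGen_hexAdj_add_triOffset hadj hkk' hll'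
    have hca : c (y + triOffset a) = b := (hk a ha).trans hy.2
    have hca' : c (y' + triOffset a') = b := (hl a' ha').trans hy'.2
    exact (ih hca).trans ((near hy.1 hy'.1 hca hca' hnear).trans
      (near hy'.1 hy'.1 hca' hj (reflGen_hexAdj_add_triOffset y' a' j)))

def YWins (m : ℕ) (c : ℤ × ℤ → Bool) (b : Bool) : Prop :=
  ∃ p q r : ℤ × ℤ, p ∈ coloredTriangle m c b ∧ p.2 = 0 ∧ q.1 = q.2 ∧ r.1 = m ∧
    ReflTransGen (Restrict HexAdj (coloredTriangle m c b)) p q ∧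
    ReflTransGen (Restrict HexAdj (coloredTriangle m c b)) p r

/-- Cells `0, 1` of a small triangle lie on its bottom side, cells `0, 2` on its diagonal and
cells `1, 2` on its right side, and each of these pairs contains a cell of the majority color. -/
theorem YWins.of_majorityReduce {m : ℕ} {c : ℤ × ℤ → Bool} {b : Bool}
    (h : YWins m (majorityReduce c) b) : YWins (m + 1) c b := by
  obtain ⟨p, q, r, hp, hp0, hqq, hrm, hpq, hpr⟩ := h
  obtain ⟨i, hi, hci⟩ := exists_eq_majorityReduce_of_ne c p (show (0 : Fin 3) ≠ 1 by decide)
  obtain ⟨j, hj, hcj⟩ := exists_eq_majorityReduce_of_ne c q (show (0 : Fin 3) ≠ 2 by decide)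
  obtain ⟨k, hk, hck⟩ := exists_eq_majorityReduce_of_ne c r (show (1 : Fin 3) ≠ 2 by decide)
  have hci := hci.trans hp.2
  have hcj := hcj.trans (hpq.mem_of_restrict hp).2
  have hck := hck.trans (hpr.mem_of_restrict hp).2
  refine ⟨p + triOffset i, q + triOffset j, r + triOffset k,
    ⟨add_triOffset_mem_triangle hp.1 i, hci⟩, ?_, ?_, ?_,
    reflTransGen_of_majorityReduce hpq hp hci hcj, reflTransGen_of_majorityReduce hpr hp hci hck⟩
  · rcases hi with rfl | rfl <;> simp [triOffset, hp0]
  · rcases hj with rfl | rfl <;> simp [triOffset, hqq]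
  · rcases hk with rfl | rfl <;> simp [triOffset, hrm]

theorem exists_yWins (m : ℕ) (c : ℤ × ℤ → Bool) : ∃ b, YWins m c b := by
  induction m generalizing c with
  | zero => exact ⟨c 0, 0, 0, 0, ⟨by simp [triangle], rfl⟩, rfl, rfl, by simp, .refl, .refl⟩
  | succ m ih => exact (ih (majorityReduce c)).imp fun _ => YWins.of_majorityReduce

theorem redWinsFin_of_reflTransGen {n : ℕ} {χ : Fin n × Fin n → Bool} {a b : Fin n × Fin n}
    (h : ReflTransGen (Restrict (fun p q => HexAdj (finCell p) (finCell q)) {p | χ p = true}) a b)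
    (ha : χ a = true) (ha0 : (a.1 : ℕ) = 0) (hb : (b.1 : ℕ) = n - 1) :
    RedWinsFin fun p => some (χ p) := by
  obtain ⟨k, f, rfl, rfl, hfχ, hf⟩ := h.exists_fin_chain_restrict ha
  exact ⟨k, f, hf, fun i => congrArg some (hfχ i), ha0, hb⟩

theorem blueWinsFin_of_reflTransGen {n : ℕ} {χ : Fin n × Fin n → Bool} {a b : Fin n × Fin n}
    (h : ReflTransGen (Restrict (fun p q => HexAdj (finCell p) (finCell q)) {p | χ p = false}) a b)
    (ha : χ a = false) (ha0 : (a.2 : ℕ) = 0) (hb : (b.2 : ℕ) = n - 1) :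
    BlueWinsFin fun p => some (χ p) := by
  obtain ⟨k, f, rfl, rfl, hfχ, hf⟩ := h.exists_fin_chain_restrict ha
  exact ⟨k, f, hf, fun i => congrArg some (hfχ i), ha0, hb⟩

section Board

variable {N : ℕ}

def boardEmbed (N : ℕ) (p : Fin (N + 1) × Fin (N + 1)) : ℤ × ℤ := finCell p + ((N : ℤ), 0)

noncomputable def hexExtend (N : ℕ) (χ : Fin (N + 1) × Fin (N + 1) → Bool) : ℤ × ℤ → Bool :=
  Function.extend (boardEmbed N) χ fun z => decide (z.2 ≤ N)

@[simp]
theorem boardEmbed_fst (p : Fin (N + 1) × Fin (N + 1)) : (boardEmbed N p).1 = p.1 + N := rfl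

@[simp]
theorem boardEmbed_snd (p : Fin (N + 1) × Fin (N + 1)) : (boardEmbed N p).2 = p.2 := by
  simp [boardEmbed, finCell]

theorem boardEmbed_injective : Function.Injective (boardEmbed N) := by
  intro p q h
  simp only [boardEmbed, finCell, Prod.ext_iff, add_left_inj, Nat.cast_inj, Fin.val_inj] at h
  exact Prod.ext h.1 h.2

theorem hexExtend_boardEmbed (χ : Fin (N + 1) × Fin (N + 1) → Bool)
    (p : Fin (N + 1) × Fin (N + 1)) :
    hexExtend N χ (boardEmbed N p) = χ p :=
  boardEmbed_injective.extend_apply _ _ _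

theorem mem_range_boardEmbed {z : ℤ × ℤ} :
    z ∈ range (boardEmbed N) ↔ N ≤ z.1 ∧ z.1 ≤ 2 * N ∧ 0 ≤ z.2 ∧ z.2 ≤ N := by
  constructor
  · rintro ⟨p, rfl⟩
    have := p.1.isLt
    have := p.2.isLt
    simp only [boardEmbed_fst, boardEmbed_snd]
    omega
  · rintro ⟨h1, h2, h3, h4⟩
    refine ⟨(⟨(z.1 - N).toNat, by omega⟩, ⟨z.2.toNat, by omega⟩), Prod.ext ?_ ?_⟩ <;>
      simp <;> omega

variable {χ : Fin (N + 1) × Fin (N + 1) → Bool}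

theorem fst_lt_of_hexExtend_eq_true {z : ℤ × ℤ}
    (hz : z ∉ range (boardEmbed N)) (hzT : z ∈ triangle (2 * N)) (h : hexExtend N χ z = true) :
    z.1 < N := by
  rw [hexExtend, Function.extend_apply' _ _ _ hz, decide_eq_true_iff] at h
  rw [mem_range_boardEmbed] at hz
  obtain ⟨h1, h2, h3⟩ := hzT
  push_cast at h3
  omega

theorem lt_snd_of_hexExtend_eq_false {z : ℤ × ℤ}
    (hz : z ∉ range (boardEmbed N)) (h : hexExtend N χ z = false) : (N : ℤ) < z.2 := by
  rw [hexExtend, Function.extend_apply' _ _ _ hz, decide_eq_false_iff_not] at h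
  omega

theorem restrict_hexAdj_finCell_of_boardEmbed {m : ℕ} {b : Bool} {p q : Fin (N + 1) × Fin (N + 1)}
    (h : Restrict HexAdj (coloredTriangle m (hexExtend N χ) b) (boardEmbed N p) (boardEmbed N q)) :
    Restrict (fun p q => HexAdj (finCell p) (finCell q)) {p | χ p = b} p q :=
  ⟨(hexAdj_add_right_iff _ _ _).1 h.1, (hexExtend_boardEmbed χ p).symm.trans h.2.1.2,
    (hexExtend_boardEmbed χ q).symm.trans h.2.2.2⟩

theorem redWinsFin_of_reflTransGen_coloredTriangle {r q : ℤ × ℤ}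
    (h : ReflTransGen (Restrict HexAdj (coloredTriangle (2 * N) (hexExtend N χ) true)) r q)
    (hr : r ∈ coloredTriangle (2 * N) (hexExtend N χ) true) (hr1 : r.1 = 2 * N)
    (hq : q.1 = q.2) : RedWinsFin fun p => some (χ p) := by
  obtain ⟨a, rfl⟩ : r ∈ range (boardEmbed N) := by
    by_contra hr'
    have := fst_lt_of_hexExtend_eq_true hr' hr.1 hr.2
    omega
  obtain ⟨b, hb, hab⟩ := h.exists_lift_to_level (g := Prod.fst) (c₀ := N)
    (fun _ _ hxy => hxy.1.fst_le)
    (fun _ _ hxy hy => fst_lt_of_hexExtend_eq_true hy hxy.2.2.1 hxy.2.2.2)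
    (fun p => (mem_range_boardEmbed.1 ⟨p, rfl⟩).1)
    (fun hq' => by have := mem_range_boardEmbed.1 hq'; omega)
  have hab := ReflTransGen.mono (fun _ _ => restrict_hexAdj_finCell_of_boardEmbed) _ _ hab
  have ha : χ a = true := (hexExtend_boardEmbed χ a).symm.trans hr.2
  refine redWinsFin_of_reflTransGen (symm hab) (hab.mem_of_restrict ha) ?_ ?_ <;>
    simp only [boardEmbed_fst] at hb hr1 <;> omega

theorem blueWinsFin_of_reflTransGen_coloredTriangle {p q : ℤ × ℤ}
    (h : ReflTransGen (Restrict HexAdj (coloredTriangle (2 * N) (hexExtend N χ) false)) p q)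
    (hp : p ∈ coloredTriangle (2 * N) (hexExtend N χ) false) (hp2 : p.2 = 0)
    (hq : q.1 = q.2) : BlueWinsFin fun p => some (χ p) := by
  obtain ⟨a, rfl⟩ : p ∈ range (boardEmbed N) := by
    by_contra hp'
    have := lt_snd_of_hexExtend_eq_false hp' hp.2
    omega
  obtain ⟨b, hb, hab⟩ := h.exists_lift_to_level (g := fun z => -z.2) (c₀ := -N)
    (fun _ _ hxy => by have := hxy.1.snd_le; omega)
    (fun _ _ hxy hy => by have := lt_snd_of_hexExtend_eq_false hy hxy.2.2.2; omega)
    (fun p => by have := (mem_range_boardEmbed.1 ⟨p, rfl⟩).2.2.2; omega)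
    (fun hq' => by have := mem_range_boardEmbed.1 hq'; omega)
  have hab := ReflTransGen.mono (fun _ _ => restrict_hexAdj_finCell_of_boardEmbed) _ _ hab
  refine blueWinsFin_of_reflTransGen hab ((hexExtend_boardEmbed χ a).symm.trans hp.2) ?_ ?_ <;>
    simp only [boardEmbed_snd] at hb hp2 <;> omega

end Board

/-- Every total coloring of the `n × n` Hex board has at least one winner. -/
theorem finite_hex_at_least_one_winner (n : ℕ) (hn : 1 ≤ n)
    (χ : Fin n × Fin n → Bool) :
    RedWinsFin (fun p => some (χ p)) ∨ BlueWinsFin (fun p => some (χ p)) := by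
  obtain ⟨N, rfl⟩ : ∃ N, n = N + 1 := ⟨n - 1, by omega⟩
  obtain ⟨b, p, q, r, hp, hp0, hqq, hr, hpq, hpr⟩ := exists_yWins (2 * N) (hexExtend N χ)
  cases b
  · exact .inr (blueWinsFin_of_reflTransGen_coloredTriangle hpq hp hp0 hqq)
  · exact .inl (redWinsFin_of_reflTransGen_coloredTriangle ((symm hpr).trans hpq)
      (hpr.mem_of_restrict hp) (by exact_mod_cast hr) hqq)
end

section
/- If Red fulfills the standard winning condition in a coloring c, then there is an injective red ℤ-chain witnessing it, i.e., an injective f : ℤ → ℤ × ℤ that is a red ℤ-chain of c and satisfies the convergence requirement of the standard winning condition for every (a,b) ∈ ℤ × ℤ. -/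
/-- A red `ℤ`-chain of the coloring `c`. -/
def IsRedChain (c : ℤ × ℤ → Option Bool) (f : ℤ → ℤ × ℤ) : Prop :=
  ∀ n : ℤ, HexAdj (f n) (f (n + 1)) ∧ c (f n) = some true

/-- A blue `ℤ`-chain of the coloring `c`. -/
def IsBlueChain (c : ℤ × ℤ → Option Bool) (f : ℤ → ℤ × ℤ) : Prop :=
  ∀ n : ℤ, HexAdj (f n) (f (n + 1)) ∧ c (f n) = some false

/-- The convergence requirement for a winning red chain: for every `(a,b)` the positive
end eventually has both coordinates `> a`, `> b`, and the negative end `< a`, `< b`. -/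
def RedConverges (f : ℤ → ℤ × ℤ) : Prop :=
  ∀ a b : ℤ, ∃ N : ℕ, ∀ n : ℕ, N ≤ n →
    a < (f n).1 ∧ b < (f n).2 ∧ (f (-(n : ℤ))).1 < a ∧ (f (-(n : ℤ))).2 < b

/-- The convergence requirement for a winning blue chain. -/
def BlueConverges (f : ℤ → ℤ × ℤ) : Prop :=
  ∀ a b : ℤ, ∃ N : ℕ, ∀ n : ℕ, N ≤ n →
    (f n).1 < a ∧ b < (f n).2 ∧ a < (f (-(n : ℤ))).1 ∧ (f (-(n : ℤ))).2 < b

/-- Red fulfills the standard winning condition in the coloring `c`. -/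
def RedWinsStd (c : ℤ × ℤ → Option Bool) : Prop :=
  ∃ f : ℤ → ℤ × ℤ, IsRedChain c f ∧ RedConverges f

/-- Blue fulfills the standard winning condition in the coloring `c`. -/
def BlueWinsStd (c : ℤ × ℤ → Option Bool) : Prop :=
  ∃ f : ℤ → ℤ × ℤ, IsBlueChain c f ∧ BlueConverges f

/-!
A red chain converging to infinity in both directions visits every cell only finitely often.
Erasing its loops chronologically (from a cell, jump to the time of its last visit and step on)
turns the forward half into an injective red ray escaping to the north-east; doing the same for
the reversed chain gives an injective ray escaping to the south-west, from the same cell. The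
first ray eventually lies above and the second below any given cell, so they meet only finitely
often, and gluing them at their last meeting point yields an injective winning chain.
-/

open Filter Function

theorem tendsto_int_atTop_iff_nat {β : Type*} {g : ℤ → β} {l : Filter β} :
    Tendsto g atTop l ↔ Tendsto (fun n : ℕ => g n) atTop l := by
  rw [← Nat.map_cast_int_atTop, tendsto_map'_iff]
  rfl

theorem tendsto_int_atBot_iff_nat {β : Type*} {g : ℤ → β} {l : Filter β} :
    Tendsto g atBot l ↔ Tendsto (fun n : ℕ => g (-n)) atTop l := by
  rw [← map_neg_atTop, ← Nat.map_cast_int_atTop, Filter.map_map, tendsto_map'_iff]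
  rfl

section LoopErasure

variable {α : Type*}

noncomputable def lastVisit (f : ℤ → α) (t : ℤ) : ℤ :=
  sSup (f ⁻¹' {f t})

noncomputable def loopErasedIndex (f : ℤ → α) (t : ℤ) : ℕ → ℤ
  | 0 => lastVisit f t
  | i + 1 => lastVisit f (loopErasedIndex f t i + 1)

variable {f : ℤ → α}

theorem apply_lastVisit (hf : ∀ p, BddAbove (f ⁻¹' {p})) (t : ℤ) : f (lastVisit f t) = f t :=
  Int.csSup_mem (s := f ⁻¹' {f t}) ⟨t, rfl⟩ (hf _)

theorem le_lastVisit (hf : ∀ p, BddAbove (f ⁻¹' {p})) {z t : ℤ} (h : f z = f t) :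
    z ≤ lastVisit f t :=
  le_csSup (hf _) h

theorem le_lastVisit_of_apply_eq (hf : ∀ p, BddAbove (f ⁻¹' {p})) {z t : ℤ}
    (h : f z = f (lastVisit f t)) : z ≤ lastVisit f t :=
  le_lastVisit hf (h.trans (apply_lastVisit hf t))

theorem le_loopErasedIndex_of_apply_eq (hf : ∀ p, BddAbove (f ⁻¹' {p})) {t z : ℤ} {i : ℕ}
    (h : f z = f (loopErasedIndex f t i)) : z ≤ loopErasedIndex f t i := by
  cases i <;> exact le_lastVisit_of_apply_eq hf h

theorem loopErasedIndex_lt_succ (hf : ∀ p, BddAbove (f ⁻¹' {p})) (t : ℤ) (i : ℕ) :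
    loopErasedIndex f t i < loopErasedIndex f t (i + 1) :=
  Int.lt_iff_add_one_le.2 (le_lastVisit hf rfl)

theorem loopErasedIndex_strictMono (hf : ∀ p, BddAbove (f ⁻¹' {p})) (t : ℤ) :
    StrictMono (loopErasedIndex f t) :=
  strictMono_nat_of_lt_succ (loopErasedIndex_lt_succ hf t)

theorem add_le_loopErasedIndex (hf : ∀ p, BddAbove (f ⁻¹' {p})) (t : ℤ) (i : ℕ) :
    t + i ≤ loopErasedIndex f t i := by
  induction i with
  | zero => simpa [loopErasedIndex] using le_lastVisit hf (rfl : f t = f t)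
  | succ i ih =>
    have := loopErasedIndex_lt_succ hf t i
    push_cast
    omega

theorem apply_loopErasedIndex_succ (hf : ∀ p, BddAbove (f ⁻¹' {p})) (t : ℤ) (i : ℕ) :
    f (loopErasedIndex f t (i + 1)) = f (loopErasedIndex f t i + 1) :=
  apply_lastVisit hf _

theorem injective_comp_loopErasedIndex (hf : ∀ p, BddAbove (f ⁻¹' {p})) (t : ℤ) :
    Injective (f ∘ loopErasedIndex f t) := by
  have hmono := loopErasedIndex_strictMono hf t
  intro i j h
  exact le_antisymm (hmono.le_iff_le.1 (le_loopErasedIndex_of_apply_eq hf h))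
    (hmono.le_iff_le.1 (le_loopErasedIndex_of_apply_eq hf h.symm))

theorem bddAbove_preimage_singleton_of_tendsto {l : Filter α} (hl : l ≤ cofinite)
    (hf : Tendsto f atTop l) (p : α) : BddAbove (f ⁻¹' {p}) := by
  obtain ⟨N, hN⟩ := eventually_atTop.1 (hf.eventually (le_cofinite_iff_eventually_ne.1 hl p))
  exact ⟨N, fun z hz => not_lt.1 fun hlt => hN z hlt.le hz⟩

theorem exists_injective_ray {R : α → α → Prop} {l : Filter α} (hl : l ≤ cofinite)
    (hR : ∀ n, R (f n) (f (n + 1))) (hf : Tendsto f atTop l) (t : ℤ) :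
    ∃ u : ℕ → α, Injective u ∧ u 0 = f t ∧ (∀ i, R (u i) (u (i + 1))) ∧
      Tendsto u atTop l := by
  have hbdd := bddAbove_preimage_singleton_of_tendsto hl hf
  refine ⟨f ∘ loopErasedIndex f t, injective_comp_loopErasedIndex hbdd t,
    apply_lastVisit hbdd t, fun i => ?_, hf.comp ?_⟩
  · simpa only [comp_apply, apply_loopErasedIndex_succ hbdd] using hR _
  · exact tendsto_atTop_mono (add_le_loopErasedIndex hbdd t)
      (tendsto_atTop_add_const_left _ t tendsto_natCast_atTop_atTop)

theorem exists_injective_ray_atBot {R : α → α → Prop} {l : Filter α} (hl : l ≤ cofinite)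
    (hR : ∀ n, R (f n) (f (n + 1))) (hf : Tendsto f atBot l) (t : ℤ) :
    ∃ v : ℕ → α, Injective v ∧ v 0 = f t ∧ (∀ i, R (v (i + 1)) (v i)) ∧
      Tendsto v atTop l := by
  have hR' : ∀ n : ℤ, R (f (-(n + 1))) (f (-n)) := fun n => by
    simpa [neg_add, add_assoc] using hR (-(n + 1))
  obtain ⟨v, hinj, hv0, hvR, hv⟩ := exists_injective_ray (f := fun n => f (-n)) (R := flip R)
    hl hR' (hf.comp tendsto_neg_atTop_atBot) (-t)
  exact ⟨v, hinj, by rw [hv0, neg_neg], hvR, hv⟩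

end LoopErasure

section Splicing

variable {α : Type*}

def joinRays (u v : ℕ → α) : ℤ → α
  | .ofNat n => u n
  | .negSucc n => v (n + 1)

variable {u v : ℕ → α}

theorem joinRays_neg_natCast (h0 : u 0 = v 0) (n : ℕ) : joinRays u v (-n) = v n := by
  cases n with
  | zero => exact h0
  | succ n => rfl

theorem joinRays_injective (hu : Injective u) (hv : Injective v) (huv : ∀ i j, u i ≠ v (j + 1)) :
    Injective (joinRays u v) := by
  rintro (m | m) (n | n) h
  · exact congrArg _ (hu h)
  · exact absurd h (huv m n)
  · exact absurd h.symm (huv n m)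
  · simpa using hv h

theorem joinRays_chain {R : α → α → Prop} (h0 : u 0 = v 0) (hu : ∀ i, R (u i) (u (i + 1)))
    (hv : ∀ i, R (v (i + 1)) (v i)) (n : ℤ) : R (joinRays u v n) (joinRays u v (n + 1)) := by
  rcases n with (n | _ | n)
  · exact hu n
  · simpa [joinRays, h0] using hv 0
  · exact hv (n + 1)

theorem exists_last_meeting (hv : Injective v) (h0 : u 0 = v 0)
    (hfin : {i | ∃ j, u i = v j}.Finite) :
    ∃ i₀ j₀, u i₀ = v j₀ ∧ ∀ i j, u (i + i₀) ≠ v (j + 1 + j₀) := by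
  obtain ⟨j₀, hj₀⟩ : sSup {i | ∃ j, u i = v j} ∈ {i | ∃ j, u i = v j} :=
    Nat.sSup_mem ⟨0, 0, h0⟩ hfin.bddAbove
  refine ⟨_, j₀, hj₀, fun i j h => ?_⟩
  have hi : i = 0 := by
    have := le_csSup hfin.bddAbove ⟨_, h⟩
    omega
  subst hi
  have := hv (hj₀.symm.trans (by simpa using h))
  omega

theorem finite_setOf_exists_eq_of_tendsto [Preorder α] [Nonempty α] [NoBotOrder α]
    (hu_inj : Injective u) (hu : Tendsto u atTop atTop)
    (hv : Tendsto v atTop atBot) : {i | ∃ j, u i = v j}.Finite := by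
  inhabit α
  have hu_ge : {i | ¬default ≤ u i}.Finite :=
    eventually_cofinite.1 (Nat.cofinite_eq_atTop ▸ hu.eventually_ge_atTop default)
  have hv_lt : {j | ¬v j < default}.Finite :=
    eventually_cofinite.1 (Nat.cofinite_eq_atTop ▸ hv.eventually_lt_atBot default)
  refine (hu_ge.union ((hv_lt.image v).preimage hu_inj.injOn)).subset ?_
  rintro i ⟨j, hij⟩
  by_cases hi : default ≤ u i
  · exact Or.inr ⟨j, fun hj => lt_irrefl _ (hi.trans_lt (hij ▸ hj)), hij.symm⟩
  · exact Or.inl hi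

theorem tendsto_joinRays_atTop {l : Filter α}
    (hu : Tendsto u atTop l) : Tendsto (joinRays u v) atTop l :=
  tendsto_int_atTop_iff_nat.2 hu

theorem tendsto_joinRays_atBot {l : Filter α} (h0 : u 0 = v 0)
    (hv : Tendsto v atTop l) : Tendsto (joinRays u v) atBot l := by
  simpa only [tendsto_int_atBot_iff_nat, joinRays_neg_natCast h0] using hv

theorem exists_injective_chain_of_rays [Preorder α] [Nonempty α] [NoBotOrder α]
    {R : α → α → Prop} (hu_inj : Injective u) (hv_inj : Injective v)
    (h0 : u 0 = v 0) (hu_chain : ∀ i, R (u i) (u (i + 1))) (hv_chain : ∀ j, R (v (j + 1)) (v j))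
    (hu : Tendsto u atTop atTop) (hv : Tendsto v atTop atBot) :
    ∃ F : ℤ → α, Injective F ∧ (∀ n, R (F n) (F (n + 1))) ∧
      Tendsto F atTop atTop ∧ Tendsto F atBot atBot := by
  obtain ⟨i₀, j₀, hmeet, hdisjoint⟩ :=
    exists_last_meeting hv_inj h0 (finite_setOf_exists_eq_of_tendsto hu_inj hu hv)
  have hmeet' : u (0 + i₀) = v (0 + j₀) := by simpa using hmeet
  refine ⟨joinRays (u <| · + i₀) (v <| · + j₀),
    joinRays_injective (hu_inj.comp (add_left_injective i₀))
      (hv_inj.comp (add_left_injective j₀)) hdisjoint,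
    joinRays_chain hmeet' (fun i => ?_) (fun j => ?_),
    tendsto_joinRays_atTop ((tendsto_add_atTop_iff_nat i₀).2 hu),
    tendsto_joinRays_atBot hmeet' ((tendsto_add_atTop_iff_nat j₀).2 hv)⟩
  · simpa only [add_right_comm] using hu_chain (i + i₀)
  · simpa only [add_right_comm] using hv_chain (j + j₀)

end Splicing

theorem redConverges_iff_nat {f : ℤ → ℤ × ℤ} :
    RedConverges f ↔ Tendsto (fun n : ℕ => f n) atTop atTop ∧
      Tendsto (fun n : ℕ => f (-n)) atTop atBot := by
  simp only [RedConverges, tendsto_atTop, tendsto_atBot, eventually_atTop, Prod.forall,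
    Prod.le_def]
  constructor
  · intro h
    refine ⟨fun a b => ?_, fun a b => ?_⟩ <;> obtain ⟨N, hN⟩ := h a b <;>
      exact ⟨N, fun n hn => by have := hN n hn; omega⟩
  · rintro ⟨htop, hbot⟩ a b
    obtain ⟨N₁, hN₁⟩ := htop (a + 1) (b + 1)
    obtain ⟨N₂, hN₂⟩ := hbot (a - 1) (b - 1)
    refine ⟨max N₁ N₂, fun n hn => ?_⟩
    have := hN₁ n (le_of_max_le_left hn)
    have := hN₂ n (le_of_max_le_right hn)
    omega

theorem redConverges_iff_tendsto {f : ℤ → ℤ × ℤ} :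
    RedConverges f ↔ Tendsto f atTop atTop ∧ Tendsto f atBot atBot := by
  rw [redConverges_iff_nat, tendsto_int_atTop_iff_nat, tendsto_int_atBot_iff_nat]

/-- If Red fulfills the standard winning condition in `c`, then there is an injective
red `ℤ`-chain witnessing it. -/
theorem infinite_hex_injective_winning_chain (c : ℤ × ℤ → Option Bool)
    (h : RedWinsStd c) :
    ∃ f : ℤ → ℤ × ℤ, Function.Injective f ∧ IsRedChain c f ∧ RedConverges f := by
  obtain ⟨f, hchain, hconv⟩ := h
  let R (p q : ℤ × ℤ) : Prop := HexAdj p q ∧ c p = some true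
  obtain ⟨hTop, hBot⟩ := redConverges_iff_tendsto.1 hconv
  obtain ⟨u, hu_inj, hu0, hu_chain, hu⟩ :=
    exists_injective_ray (R := R) atTop_le_cofinite hchain hTop 0
  obtain ⟨v, hv_inj, hv0, hv_chain, hv⟩ :=
    exists_injective_ray_atBot (R := R) atBot_le_cofinite hchain hBot 0
  obtain ⟨F, hF_inj, hF_chain, hF_top, hF_bot⟩ := exists_injective_chain_of_rays hu_inj hv_inj
    (hu0.trans hv0.symm) hu_chain hv_chain hu hv
  exact ⟨F, hF_inj, hF_chain, redConverges_iff_tendsto.2 ⟨hF_top, hF_bot⟩⟩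
end

section
/- For every coloring c of the infinite Hex board and every fixed origin (a,b) ∈ ℤ × ℤ, it is not the case that both Red and Blue win c with respect to the fixed origin (a,b). -/
/-- Red wins `c` with respect to the fixed origin `(a, b)`: there is an injective red
`ℤ`-chain eventually in quadrant I on its positive end and in quadrant III on its
negative end, with respect to the origin `(a, b)`. -/
def RedWinsFixedOrigin (c : ℤ × ℤ → Option Bool) (a b : ℤ) : Prop :=
  ∃ f : ℤ → ℤ × ℤ, Function.Injective f ∧ IsRedChain c f ∧
    ∃ N : ℕ, ∀ n : ℕ, N ≤ n →
      a < (f n).1 ∧ b < (f n).2 ∧ (f (-(n : ℤ))).1 < a ∧ (f (-(n : ℤ))).2 < b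

/-- Blue wins `c` with respect to the fixed origin `(a, b)`. -/
def BlueWinsFixedOrigin (c : ℤ × ℤ → Option Bool) (a b : ℤ) : Prop :=
  ∃ f : ℤ → ℤ × ℤ, Function.Injective f ∧ IsBlueChain c f ∧
    ∃ N : ℕ, ∀ n : ℕ, N ≤ n →
      (f n).1 < a ∧ b < (f n).2 ∧ a < (f (-(n : ℤ))).1 ∧ (f (-(n : ℤ))).2 < b


/-!
Let `level (x, y) = x + y`. For a point `q` off a red chain, count modulo 2 how often the chain
crosses the ray from `q + (1/2, 0)` in direction `(-1, 1)`. Moving `q` along a blue step leaves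
this parity unchanged, because two lattice edges with four distinct endpoints do not cross; so
it is constant along a blue chain disjoint from the red one. A winning red chain runs from level
`-∞` to level `+∞`. Far out in quadrant IV, the blue chain reaches a point below-right of which
there is no red cell; then every red crossing of the level line of `q` is a crossing of the ray,
and the parity is `1`. Far out in quadrant II, it reaches a point above-left of which there is no
red cell; the ray lies in that region, and the parity is `0`.
-/

open Filter Set

namespace Hex

def level (p : ℤ × ℤ) : ℤ := p.1 + p.2

lemma hexAdj_iff {p q : ℤ × ℤ} :
    HexAdj p q ↔
      q.1 = p.1 + 1 ∧ q.2 = p.2 ∨ q.1 = p.1 - 1 ∧ q.2 = p.2 ∨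
      q.1 = p.1 ∧ q.2 = p.2 + 1 ∨ q.1 = p.1 ∧ q.2 = p.2 - 1 ∨
      q.1 = p.1 + 1 ∧ q.2 = p.2 + 1 ∨ q.1 = p.1 - 1 ∧ q.2 = p.2 - 1 := by
  simp only [HexAdj, mem_insert_iff, mem_singleton_iff, Prod.ext_iff, Prod.fst_sub,
    Prod.snd_sub]
  omega

/-- The segment `AB` crosses the ray from `q + (1/2, 0)` in direction `(-1, 1)`, which runs
along the half-integer level `level q + 1/2`. -/
def Crosses (q A B : ℤ × ℤ) : Prop :=
  (level A ≤ level q ↔ level q < level B) ∧ q.2 ≤ A.2 ∧ q.2 ≤ B.2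

/-- The lattice points of the region bounded by the rays of `q` and `q'` and the segment joining
their origins. -/
def InStrip (q q' X : ℤ × ℤ) : Prop :=
  level q < level X ∧ level X ≤ level q' ∧ q.2 < X.2 ∨
    level q' < level X ∧ level X ≤ level q ∧ q'.2 < X.2

/-- The boundary of the strip consists of the two rays and the edge `qq'`, which `AB` cannot
cross. -/
lemma crosses_iff_crosses_iff_inStrip {q q' A B : ℤ × ℤ} (hq : HexAdj q q') (hAB : HexAdj A B)
    (hA : A ≠ q ∧ A ≠ q') (hB : B ≠ q ∧ B ≠ q') :
    (Crosses q A B ↔ Crosses q' A B) ↔ (InStrip q q' A ↔ InStrip q q' B) := by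
  obtain ⟨x, y⟩ := q; obtain ⟨x', y'⟩ := q'; obtain ⟨u, v⟩ := A; obtain ⟨u', v'⟩ := B
  rw [hexAdj_iff] at hq hAB
  simp only [Crosses, InStrip, level, Ne, Prod.ext_iff] at *
  rcases hq with ⟨rfl, rfl⟩ | ⟨rfl, rfl⟩ | ⟨rfl, rfl⟩ | ⟨rfl, rfl⟩ | ⟨rfl, rfl⟩ | ⟨rfl, rfl⟩ <;>
    rcases hAB with ⟨rfl, rfl⟩ | ⟨rfl, rfl⟩ | ⟨rfl, rfl⟩ | ⟨rfl, rfl⟩ | ⟨rfl, rfl⟩ | ⟨rfl, rfl⟩ <;>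
    grind

open scoped Classical in
noncomputable def ind (P : Prop) : ZMod 2 := if P then 1 else 0

lemma ind_of_not {P : Prop} (h : ¬P) : ind P = 0 := if_neg h

lemma ind_add_ind_eq_of_iff_iff {P Q R T : Prop} (h : (P ↔ Q) ↔ (R ↔ T)) :
    ind P + ind Q = ind R + ind T := by
  unfold ind; split_ifs <;> simp_all <;> decide

lemma ind_le_iff_lt (x y z : ℤ) : ind (x ≤ z ↔ z < y) = ind (z < y) - ind (z < x) := by
  unfold ind; split_ifs <;> first | omega | decide

noncomputable def crossingParity (p : ℕ → ℤ × ℤ) (n : ℕ) (q : ℤ × ℤ) : ZMod 2 :=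
  ∑ i ∈ Finset.range n, ind (Crosses q (p i) (p (i + 1)))

section Walks

variable {p : ℕ → ℤ × ℤ} {n : ℕ}

lemma crossingParity_eq_of_hexAdj {q q' : ℤ × ℤ} (hp : ∀ i < n, HexAdj (p i) (p (i + 1)))
    (hq : HexAdj q q') (hpq : ∀ i ≤ n, p i ≠ q ∧ p i ≠ q')
    (h₀ : ¬InStrip q q' (p 0)) (hₙ : ¬InStrip q q' (p n)) :
    crossingParity p n q = crossingParity p n q' := by
  have hsum : crossingParity p n q + crossingParity p n q' =
      ∑ i ∈ Finset.range n, (ind (InStrip q q' (p (i + 1))) - ind (InStrip q q' (p i))) := by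
    rw [crossingParity, crossingParity, ← Finset.sum_add_distrib]
    refine Finset.sum_congr rfl fun i hi => ?_
    rw [Finset.mem_range] at hi
    rw [CharTwo.sub_eq_add, add_comm (ind (InStrip q q' (p (i + 1))))]
    exact ind_add_ind_eq_of_iff_iff <| crosses_iff_crosses_iff_inStrip hq (hp i hi)
      (hpq i hi.le) (hpq (i + 1) hi)
  rwa [Finset.sum_range_sub (fun i => ind (InStrip q q' (p i))), ind_of_not h₀, ind_of_not hₙ,
    sub_zero, CharTwo.add_eq_zero] at hsum

lemma crossingParity_eq_zero {q : ℤ × ℤ} (h : ∀ i ≤ n, p i ∉ Iic q.1 ×ˢ Ici q.2) :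
    crossingParity p n q = 0 := by
  refine Finset.sum_eq_zero fun i hi => ind_of_not fun ⟨hlev, hA, hB⟩ => ?_
  rw [Finset.mem_range] at hi
  have hA' := h i hi.le
  have hB' := h (i + 1) hi
  simp only [mem_prod, mem_Iic, mem_Ici, level] at hA' hB' hlev
  omega

lemma crossingParity_eq_one {q : ℤ × ℤ} (hp : ∀ i < n, HexAdj (p i) (p (i + 1)))
    (h : ∀ i ≤ n, p i ∉ Ici q.1 ×ˢ Iic q.2) (h₀ : level (p 0) ≤ level q)
    (hₙ : level q < level (p n)) : crossingParity p n q = 1 := by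
  have hterm : ∀ i ∈ Finset.range n, ind (Crosses q (p i) (p (i + 1))) =
      ind (level q < level (p (i + 1))) - ind (level q < level (p i)) := by
    intro i hi
    rw [Finset.mem_range] at hi
    rw [← ind_le_iff_lt]
    refine congrArg ind (propext ?_)
    have hA := h i hi.le
    have hB := h (i + 1) hi
    have hAB := hexAdj_iff.1 (hp i hi)
    simp only [Crosses, mem_prod, mem_Ici, mem_Iic, level] at hA hB ⊢
    omega
  rw [crossingParity, Finset.sum_congr rfl hterm,
    Finset.sum_range_sub (fun i => ind (level q < level (p i)))]
  unfold ind
  rw [if_pos hₙ, if_neg h₀.not_gt, sub_zero]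

lemma not_inStrip_of_le {q q' X : ℤ × ℤ} (h : level X ≤ level q) (h' : level X ≤ level q') :
    ¬InStrip q q' X := by
  unfold InStrip; omega

lemma not_inStrip_of_lt {q q' X : ℤ × ℤ} (h : level q < level X) (h' : level q' < level X) :
    ¬InStrip q q' X := by
  unfold InStrip; omega

lemma crossingParity_eq_of_walk {r : ℕ → ℤ × ℤ} {k : ℕ}
    (hp : ∀ i < n, HexAdj (p i) (p (i + 1))) (hr : ∀ j < k, HexAdj (r j) (r (j + 1)))
    (hpr : ∀ i ≤ n, ∀ j ≤ k, p i ≠ r j)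
    (hlev : ∀ j ≤ k, level (p 0) ≤ level (r j) ∧ level (r j) < level (p n)) :
    crossingParity p n (r 0) = crossingParity p n (r k) := by
  induction k with
  | zero => rfl
  | succ k ih =>
    rw [ih (fun j hj => hr j (by omega)) (fun i hi j hj => hpr i hi j (by omega))
      (fun j hj => hlev j (by omega))]
    have hk := hlev k (by omega)
    have hk' := hlev (k + 1) le_rfl
    exact crossingParity_eq_of_hexAdj hp (hr k (by omega))
      (fun i hi => ⟨hpr i hi k (by omega), hpr i hi (k + 1) le_rfl⟩)
      (not_inStrip_of_le hk.1 hk'.1) (not_inStrip_of_lt hk.2 hk'.2)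

theorem exists_eq_of_walks {r : ℕ → ℤ × ℤ} {k : ℕ}
    (hp : ∀ i < n, HexAdj (p i) (p (i + 1))) (hr : ∀ j < k, HexAdj (r j) (r (j + 1)))
    (hlev : ∀ j ≤ k, level (p 0) ≤ level (r j) ∧ level (r j) < level (p n))
    (h₀ : ∀ i ≤ n, p i ∉ Ici (r 0).1 ×ˢ Iic (r 0).2)
    (hₖ : ∀ i ≤ n, p i ∉ Iic (r k).1 ×ˢ Ici (r k).2) :
    ∃ i ≤ n, ∃ j ≤ k, p i = r j := by
  by_contra! hpr
  have h := crossingParity_eq_of_walk hp hr hpr hlev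
  rw [crossingParity_eq_one hp h₀ (hlev 0 k.zero_le).1 (hlev 0 k.zero_le).2,
    crossingParity_eq_zero hₖ] at h
  exact one_ne_zero h

end Walks

lemma eventually_mem_prod_of_tail {f : ℤ → ℤ × ℤ} {S₁ S₂ T₁ T₂ : Set ℤ}
    (h : ∃ N : ℕ, ∀ n : ℕ, N ≤ n →
      (f n).1 ∈ S₁ ∧ (f n).2 ∈ S₂ ∧ (f (-(n : ℤ))).1 ∈ T₁ ∧ (f (-(n : ℤ))).2 ∈ T₂) :
    (∀ᶠ n in atTop, f n ∈ S₁ ×ˢ S₂) ∧ ∀ᶠ n in atBot, f n ∈ T₁ ×ˢ T₂ := by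
  obtain ⟨N, hN⟩ := h
  refine ⟨eventually_atTop.2 ⟨N, fun n hn => ?_⟩, eventually_atBot.2 ⟨-N, fun n hn => ?_⟩⟩
  · lift n to ℕ using by omega
    exact ⟨(hN n (by omega)).1, (hN n (by omega)).2.1⟩
  · obtain ⟨m, rfl⟩ : ∃ m : ℕ, n = -m := ⟨n.natAbs, by omega⟩
    exact (hN m (by omega)).2.2

lemma tendsto_level_atTop {ι : Type*} {l : Filter ι} {f : ι → ℤ × ℤ} {a b : ℤ}
    (hf : Tendsto f l cofinite) (hI : ∀ᶠ i in l, f i ∈ Ioi a ×ˢ Ioi b) :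
    Tendsto (fun i => level (f i)) l atTop := by
  refine tendsto_atTop.2 fun C => ?_
  filter_upwards [hI, hf.eventually (finite_Icc (a, b) (C - b, C - a)).eventually_cofinite_notMem]
    with i hi hC
  simp only [mem_prod, mem_Ioi, mem_Icc, Prod.le_def, level] at hi hC ⊢
  omega

lemma tendsto_level_atBot {ι : Type*} {l : Filter ι} {f : ι → ℤ × ℤ} {a b : ℤ}
    (hf : Tendsto f l cofinite) (hIII : ∀ᶠ i in l, f i ∈ Iio a ×ˢ Iio b) :
    Tendsto (fun i => level (f i)) l atBot := by
  refine tendsto_atBot.2 fun C => ?_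
  filter_upwards [hIII, hf.eventually (finite_Icc (C - b, C - a) (a, b)).eventually_cofinite_notMem]
    with i hi hC
  simp only [mem_prod, mem_Iio, mem_Icc, Prod.le_def, level] at hi hC ⊢
  omega

lemma finite_setOf_mem_of_eventually {α : Type*} {f : ℤ → α} {S : Set α}
    (htop : ∀ᶠ n in atTop, f n ∉ S) (hbot : ∀ᶠ n in atBot, f n ∉ S) : {n | f n ∈ S}.Finite := by
  have h : ∀ᶠ n in cofinite, f n ∉ S := by
    rw [Int.cofinite_eq]
    exact eventually_sup.2 ⟨hbot, htop⟩
  simpa using eventually_cofinite.1 h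

lemma eventually_forall_notMem_Iic_prod_Ici {ι : Type*} {l : Filter ι} {f : ℤ → ℤ × ℤ}
    {g : ι → ℤ × ℤ} {a b : ℤ} (hf : {n | f n ∈ Iio a ×ˢ Ioi b}.Finite) (hg : Tendsto g l cofinite)
    (hII : ∀ᶠ m in l, g m ∈ Iio a ×ˢ Ioi b) :
    ∀ᶠ m in l, ∀ n, f n ∉ Iic (g m).1 ×ˢ Ici (g m).2 := by
  have hfin := hf.biUnion fun n _ => finite_Icc ((f n).1, b) (a, (f n).2)
  filter_upwards [hII, hg.eventually hfin.eventually_cofinite_notMem] with m hm hfar n hn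
  simp only [mem_prod, mem_Iio, mem_Ioi, mem_Iic, mem_Ici] at hm hn
  exact hfar (mem_biUnion (x := n) ⟨hn.1.trans_lt hm.1, hm.2.trans_le hn.2⟩
    ⟨⟨hn.1, hm.2.le⟩, hm.1.le, hn.2⟩)

lemma eventually_forall_notMem_Ici_prod_Iic {ι : Type*} {l : Filter ι} {f : ℤ → ℤ × ℤ}
    {g : ι → ℤ × ℤ} {a b : ℤ} (hf : {n | f n ∈ Ioi a ×ˢ Iio b}.Finite) (hg : Tendsto g l cofinite)
    (hIV : ∀ᶠ m in l, g m ∈ Ioi a ×ˢ Iio b) :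
    ∀ᶠ m in l, ∀ n, f n ∉ Ici (g m).1 ×ˢ Iic (g m).2 := by
  have hfin := hf.biUnion fun n _ => finite_Icc (a, (f n).2) ((f n).1, b)
  filter_upwards [hIV, hg.eventually hfin.eventually_cofinite_notMem] with m hm hfar n hn
  simp only [mem_prod, mem_Iio, mem_Ioi, mem_Iic, mem_Ici] at hm hn
  exact hfar (mem_biUnion (x := n) ⟨hm.1.trans_le hn.1, hn.2.trans_lt hm.2⟩
    ⟨⟨hm.1.le, hn.2⟩, hn.1, hm.2.le⟩)

lemma eventually_add_natCast {P : ℤ → Prop} (h : ∀ᶠ n in atTop, P n) (m : ℤ) :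
    ∀ᶠ k : ℕ in atTop, P (m + k) :=
  (tendsto_atTop_add_const_left _ m tendsto_natCast_atTop_atTop).eventually h

lemma exists_window {f : ℤ → ℤ × ℤ} (htop : Tendsto (fun n => level (f n)) atTop atTop)
    (hbot : Tendsto (fun n => level (f n)) atBot atBot) (L : Finset ℤ) :
    ∃ s : ℤ, ∃ t : ℕ, ∀ x ∈ L, level (f s) ≤ x ∧ x < level (f (s + t)) := by
  obtain ⟨s, hs⟩ := (L.eventually_all.2 fun x _ => hbot.eventually_le_atBot x).exists
  obtain ⟨t, ht⟩ :=
    (eventually_add_natCast (L.eventually_all.2 fun x _ => htop.eventually_gt_atTop x) s).exists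
  exact ⟨s, t, fun x hx => ⟨hs x hx, ht x hx⟩⟩

theorem exists_eq_of_chains {f g : ℤ → ℤ × ℤ} {a b : ℤ}
    (hf : ∀ n, HexAdj (f n) (f (n + 1))) (hg : ∀ n, HexAdj (g n) (g (n + 1)))
    (hf_inj : Function.Injective f) (hg_inj : Function.Injective g)
    (hfI : ∀ᶠ n in atTop, f n ∈ Ioi a ×ˢ Ioi b) (hfIII : ∀ᶠ n in atBot, f n ∈ Iio a ×ˢ Iio b)
    (hgII : ∀ᶠ n in atTop, g n ∈ Iio a ×ˢ Ioi b) (hgIV : ∀ᶠ n in atBot, g n ∈ Ioi a ×ˢ Iio b) :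
    ∃ m n, f m = g n := by
  have hfII : {n | f n ∈ Iio a ×ˢ Ioi b}.Finite :=
    finite_setOf_mem_of_eventually (hfI.mono fun _ h h' => lt_asymm (mem_Ioi.1 h.1) h'.1)
      (hfIII.mono fun _ h h' => lt_asymm (mem_Iio.1 h.2) h'.2)
  have hfIV : {n | f n ∈ Ioi a ×ˢ Iio b}.Finite :=
    finite_setOf_mem_of_eventually (hfI.mono fun _ h h' => lt_asymm (mem_Ioi.1 h.2) h'.2)
      (hfIII.mono fun _ h h' => lt_asymm (mem_Iio.1 h.1) h'.1)
  obtain ⟨m, hm⟩ := (eventually_forall_notMem_Ici_prod_Iic hfIV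
    (hg_inj.tendsto_cofinite.mono_left atBot_le_cofinite) hgIV).exists
  obtain ⟨k, hk⟩ := (eventually_add_natCast (eventually_forall_notMem_Iic_prod_Ici hfII
    (hg_inj.tendsto_cofinite.mono_left atTop_le_cofinite) hgII) m).exists
  obtain ⟨s, t, hst⟩ := exists_window
    (tendsto_level_atTop (hf_inj.tendsto_cofinite.mono_left atTop_le_cofinite) hfI)
    (tendsto_level_atBot (hf_inj.tendsto_cofinite.mono_left atBot_le_cofinite) hfIII)
    ((Finset.range (k + 1)).image fun j : ℕ => level (g (m + j)))
  obtain ⟨i, -, j, -, hij⟩ := exists_eq_of_walks (p := fun i : ℕ => f (s + i))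
    (r := fun j : ℕ => g (m + j)) (n := t) (k := k)
    (fun i _ => by simpa [add_assoc] using hf (s + i))
    (fun j _ => by simpa [add_assoc] using hg (m + j))
    (fun j hj => by
      simpa using hst _ (Finset.mem_image_of_mem _ (Finset.mem_range.2 (Nat.lt_succ_of_le hj))))
    (fun i _ => by simpa using hm (s + i)) (fun i _ => hk (s + i))
  exact ⟨_, _, hij⟩

end Hex

/-- For any coloring and any fixed origin, not both players win with respect to that
origin. -/
theorem infinite_hex_fixed_origin_at_most_one_winner
    (c : ℤ × ℤ → Option Bool) (a b : ℤ) :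
    ¬ (RedWinsFixedOrigin c a b ∧ BlueWinsFixedOrigin c a b) := by
  rintro ⟨⟨f, hf_inj, hf, hf_tail⟩, ⟨g, hg_inj, hg, hg_tail⟩⟩
  obtain ⟨hfI, hfIII⟩ := Hex.eventually_mem_prod_of_tail
    (S₁ := Ioi a) (S₂ := Ioi b) (T₁ := Iio a) (T₂ := Iio b) hf_tail
  obtain ⟨hgII, hgIV⟩ := Hex.eventually_mem_prod_of_tail
    (S₁ := Iio a) (S₂ := Ioi b) (T₁ := Ioi a) (T₂ := Iio b) hg_tail
  obtain ⟨m, n, hmn⟩ := Hex.exists_eq_of_chains (fun n => (hf n).1) (fun n => (hg n).1)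
    hf_inj hg_inj hfI hfIII hgII hgIV
  have hcolor := (hf m).2
  rw [hmn, (hg n).2] at hcolor
  simp at hcolor
end

section
/- Only finite game values occur in infinite Hex: every game position of infinite Hex that has a game value for Red has a finite game value (its value is a natural number); and symmetrically for Blue. -/
/-- Red fulfills the standard winning condition in the total coloring `χ`. -/
def RedWinsStdTotal (χ : ℤ × ℤ → Bool) : Prop :=
  RedWinsStd (fun q => some (χ q))

/-- Blue fulfills the standard winning condition in the total coloring `χ`. -/
def BlueWinsStdTotal (χ : ℤ × ℤ → Bool) : Prop :=
  BlueWinsStd (fun q => some (χ q))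

/-- The total coloring `χ` agrees with the partial coloring `c` on all non-empty
cells. -/
def AgreesWith (c : ℤ × ℤ → Option Bool) (χ : ℤ × ℤ → Bool) : Prop :=
  ∀ q : ℤ × ℤ, ∀ b : Bool, c q = some b → χ q = b

/-- The position with partial coloring `c` is won for the player of color `w`
(`true` = Red): every total coloring agreeing with `c` on the non-empty cells fulfills
that player's standard winning condition. -/
def WonBy (w : Bool) (c : ℤ × ℤ → Option Bool) : Prop :=
  ∀ χ : ℤ × ℤ → Bool, AgreesWith c χ →
    (if w then RedWinsStdTotal χ else BlueWinsStdTotal χ)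

/-- `HexValAt w c t α` expresses that `α` arises by the game-value recursion for the
player of color `w` at the position `(c, t)` (with `t` the color of the player to
move): a `w`-won position has value `0`; if it is `w`'s turn and some move leads to a
position with value `α`, the position gets value `α + 1`; if it is the opponent's turn,
the position is not yet won, and every opponent move leads to a position with a value,
the position gets the supremum of (a choice of) those values.  The game value of the
position is the least `α` with `HexValAt w c t α`, so that at a `w`-turn the successor
of the least value of a child is taken, and at an opponent turn the supremum of the
children's values. -/
inductive HexValAt (w : Bool) : (ℤ × ℤ → Option Bool) → Bool → Ordinal → Prop where
  | won {c : ℤ × ℤ → Option Bool} {t : Bool} :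
      WonBy w c → HexValAt w c t 0
  | mover {c : ℤ × ℤ → Option Bool} {q : ℤ × ℤ} {α : Ordinal} :
      ¬ WonBy w c → c q = none →
      HexValAt w (Function.update c q (some w)) (!w) α →
      HexValAt w c w (α + 1)
  | opp {c : ℤ × ℤ → Option Bool} (V : ∀ q : ℤ × ℤ, c q = none → Ordinal) :
      ¬ WonBy w c →
      (∀ (q : ℤ × ℤ) (h : c q = none),
        HexValAt w (Function.update c q (some (!w))) w (V q h)) →
      HexValAt w c (!w) (sSup {β : Ordinal | ∃ (q : ℤ × ℤ) (h : c q = none), V q h = β})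

/-- `α` is the game value for the player of color `w` of the position `(c, t)`: the
least ordinal arising from the game-value recursion at this position. -/
def HexGameValue (w : Bool) (c : ℤ × ℤ → Option Bool) (t : Bool) (α : Ordinal) : Prop :=
  HexValAt w c t α ∧ ∀ β : Ordinal, HexValAt w c t β → α ≤ β

/-!
Induction on the derivation of a value shows that every position with a value also has a value
bounded by a natural number. The only difficulty is the opponent's turn with infinitely many
empty cells, where the bounds on the answers to the opponent's moves must be uniform. Two facts
give this. An extra opponent stone never raises the value: while infinitely many cells are
empty, an opponent move onto its cell can be traded for a move elsewhere. And a derivation of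
value `β` has a finite support `S`: opponent stones on finitely many empty cells outside `S`
keep the value at most `β`. So if the answer to the opponent move `d` has value at most `N`,
then so does the answer to any move `q` outside `{d} ∪ S`: add a stone at `q` to the position
after `d`, then remove the one at `d`. The finitely many remaining moves are bounded by
induction.
-/

open Function

universe u

lemma exists_uniform_bound_of_finite_exceptions {ι : Type*} {s E : Set ι} {P : ι → ℕ → Prop}
    (h : ∀ i ∈ s, ∃ n, P i n) (hE : E.Finite) {M : ℕ}
    (hM : ∀ i ∈ s, i ∉ E → ∃ n ≤ M, P i n) : ∃ N, ∀ i ∈ s, ∃ n ≤ N, P i n := by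
  choose! n hn using h
  obtain ⟨K, hK⟩ := (hE.image n).bddAbove
  refine ⟨max M K, fun i hi => ?_⟩
  by_cases hiE : i ∈ E
  · exact ⟨n i, (hK ⟨i, hiE, rfl⟩).trans (le_max_right M K), hn i hi⟩
  · obtain ⟨m, hm, hP⟩ := hM i hi hiE
    exact ⟨m, hm.trans (le_max_left M K), hP⟩

section

variable {w : Bool} {c c' : ℤ × ℤ → Option Bool} {t : Bool}

lemma winsStdTotal_mono {χ χ' : ℤ × ℤ → Bool} (h : ∀ p, χ p = w → χ' p = w) :
    (if w then RedWinsStdTotal χ else BlueWinsStdTotal χ) →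
      (if w then RedWinsStdTotal χ' else BlueWinsStdTotal χ') := by
  cases w <;> rintro ⟨f, hf, hconv⟩ <;>
    exact ⟨f, fun n => ⟨(hf n).1, by simpa using h _ (by simpa using (hf n).2)⟩, hconv⟩

lemma WonBy.mono (hc : WonBy w c) (h : ∀ p, c p = some w → c' p = some w) :
    WonBy w c' := by
  intro χ' hχ'
  -- the completion of `c` least favourable to `w`
  let χ : ℤ × ℤ → Bool := fun p => if c p = some w then w else !w
  have hχ : AgreesWith c χ := by
    intro q b hq
    by_cases hb : b = w
    · simp [χ, hq, hb]
    · have : b = !w := by cases b <;> cases w <;> simp_all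
      simp [χ, hq, this]
  refine winsStdTotal_mono (fun p hp => hχ' p w (h p ?_)) (hc χ hχ)
  by_contra hne
  simp [χ, hne] at hp

lemma wonBy_update_opponent_iff {q : ℤ × ℤ} (hq : c q = none) :
    WonBy w (update c q (some !w)) ↔ WonBy w c := by
  constructor <;> intro hW <;> refine hW.mono fun p hp => ?_ <;>
    by_cases hpq : p = q <;> simp_all

def placeOpponent (w : Bool) (c : ℤ × ℤ → Option Bool) (B : Finset (ℤ × ℤ)) :
    ℤ × ℤ → Option Bool :=
  fun p => if p ∈ B then some (!w) else c p

lemma placeOpponent_eq_none_iff {B : Finset (ℤ × ℤ)} {p : ℤ × ℤ} :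
    placeOpponent w c B p = none ↔ p ∉ B ∧ c p = none := by
  unfold placeOpponent
  split_ifs with h <;> simp [h]

lemma placeOpponent_singleton (q : ℤ × ℤ) :
    placeOpponent w c {q} = update c q (some !w) := by
  funext p
  by_cases hpq : p = q <;> simp [placeOpponent, hpq]

lemma placeOpponent_insert (B : Finset (ℤ × ℤ)) (q : ℤ × ℤ) :
    placeOpponent w c (insert q B) = update (placeOpponent w c B) q (some !w) := by
  funext p
  by_cases hpq : p = q <;> simp [placeOpponent, hpq]

lemma placeOpponent_update {B : Finset (ℤ × ℤ)} {q : ℤ × ℤ} (hq : q ∉ B) (v : Option Bool) :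
    placeOpponent w (update c q v) B = update (placeOpponent w c B) q v := by
  funext p
  by_cases hpq : p = q
  · subst hpq; simp [placeOpponent, hq]
  · simp [placeOpponent, hpq]

lemma wonBy_placeOpponent_iff {B : Finset (ℤ × ℤ)} (hB : ∀ p ∈ B, c p = none) :
    WonBy w (placeOpponent w c B) ↔ WonBy w c := by
  constructor <;> intro hW <;> refine hW.mono fun p hp => ?_
  · unfold placeOpponent at hp
    split_ifs at hp
    · simp at hp
    · exact hp
  · have hpB : p ∉ B := fun h => by simp [hB p h] at hp
    simp [placeOpponent, hpB, hp]

lemma infinite_setOf_update_eq_none (hc : {p | c p = none}.Infinite) (q : ℤ × ℤ)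
    (v : Option Bool) : {p | update c q v p = none}.Infinite :=
  (hc.sdiff (Set.finite_singleton q)).mono fun _ _ => by simp_all

lemma infinite_setOf_placeOpponent_eq_none (hc : {p | c p = none}.Infinite)
    (B : Finset (ℤ × ℤ)) : {p | placeOpponent w c B p = none}.Infinite :=
  (hc.sdiff B.finite_toSet).mono fun _ hp => placeOpponent_eq_none_iff.2 ⟨hp.2, hp.1⟩

end

namespace HexValAt

variable {w : Bool} {c : ℤ × ℤ → Option Bool} {t : Bool}

lemma le_sSup_values (V : ∀ q : ℤ × ℤ, c q = none → Ordinal.{u}) (q : ℤ × ℤ)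
    (hq : c q = none) : V q hq ≤ sSup {β | ∃ (q : ℤ × ℤ) (h : c q = none), V q h = β} := by
  refine le_csSup ?_ ⟨q, hq, rfl⟩
  have : {β | ∃ (q : ℤ × ℤ) (h : c q = none), V q h = β} =
      Set.range fun x : {q // c q = none} => V x.1 x.2 := by
    ext β
    exact ⟨fun ⟨q, h, hβ⟩ => ⟨⟨q, h⟩, hβ⟩, fun ⟨⟨q, h⟩, hβ⟩ => ⟨q, h, hβ⟩⟩
  rw [this]
  exact Ordinal.bddAbove_of_small

lemma opp_of_forall_le {b : Ordinal.{u}} (hnw : ¬ WonBy w c)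
    (h : ∀ q, c q = none → ∃ γ ≤ b, HexValAt w (update c q (some !w)) w γ) :
    ∃ γ ≤ b, HexValAt w c (!w) γ := by
  choose V hVb hV using h
  exact ⟨_, csSup_le' (by rintro _ ⟨q, hq, rfl⟩; exact hVb q hq), opp V hnw hV⟩

lemma remove_opponent_stone {d : ℤ × ℤ} {β : Ordinal.{u}} (hd : c d = none)
    (hc : {p | c p = none}.Infinite) (D : HexValAt w (update c d (some !w)) t β) :
    ∃ γ ≤ β, HexValAt w c t γ := by
  generalize hc₁ : update c d (some !w) = c₁ at D
  induction D generalizing c d with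
  | won hW =>
    subst hc₁
    exact ⟨0, le_rfl, won ((wonBy_update_opponent_iff hd).1 hW)⟩
  | @mover c₁ q α hnw hq D₀ IH =>
    subst hc₁
    have hqd : q ≠ d := by rintro rfl; simp at hq
    have hcq : c q = none := by simpa [hqd] using hq
    obtain ⟨γ, hγ, D'⟩ := IH (c := update c q (some w)) (d := d) (by simpa [hqd.symm] using hd)
      (infinite_setOf_update_eq_none hc q _) (update_comm hqd _ _ _)
    exact ⟨γ + 1, add_le_add_left hγ 1,
      mover (fun h => hnw ((wonBy_update_opponent_iff hd).2 h)) hcq D'⟩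
  | @opp c₁ V hnw hV IH =>
    subst hc₁
    have hc₁ := infinite_setOf_update_eq_none hc d (some !w)
    refine opp_of_forall_le (fun h => hnw ((wonBy_update_opponent_iff hd).2 h)) fun q hq => ?_
    by_cases hqd : q = d
    · -- the move at `d` recreates `c₁`: compare with the move at another empty `e`, then
      -- remove the stone at `e`
      subst hqd
      obtain ⟨e, he⟩ := hc₁.nonempty
      obtain ⟨γ, hγ, D'⟩ := IH e he he (infinite_setOf_update_eq_none hc q _) rfl
      exact ⟨γ, hγ.trans (le_sSup_values V e he), D'⟩
    · have hq₁ : update c d (some !w) q = none := by simpa [hqd] using hq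
      obtain ⟨γ, hγ, D'⟩ := IH q hq₁ (c := update c q (some !w)) (d := d)
        (by simpa [Ne.symm hqd] using hd) (infinite_setOf_update_eq_none hc q _)
        (update_comm hqd _ _ _)
      exact ⟨γ, hγ.trans (le_sSup_values V q hq₁), D'⟩

lemma exists_finite_support {β : Ordinal.{u}} (hc : {p | c p = none}.Infinite)
    (D : HexValAt w c t β) :
    ∃ S : Finset (ℤ × ℤ), ∀ B : Finset (ℤ × ℤ), (∀ p ∈ B, c p = none ∧ p ∉ S) →
      ∃ γ ≤ β, HexValAt w (placeOpponent w c B) t γ := by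
  induction D with
  | won hW =>
    exact ⟨∅, fun B hB =>
      ⟨0, le_rfl, won ((wonBy_placeOpponent_iff fun p hp => (hB p hp).1).2 hW)⟩⟩
  | @mover c q α hnw hq D₀ IH =>
    obtain ⟨S, hS⟩ := IH (infinite_setOf_update_eq_none hc q _)
    refine ⟨insert q S, fun B hB => ?_⟩
    have hqB : q ∉ B := fun h => (hB q h).2 (Finset.mem_insert_self q S)
    obtain ⟨γ, hγ, D'⟩ := hS B fun p hp => by
      have hpq : p ≠ q := by rintro rfl; exact hqB hp
      simpa [hpq] using hB p hp
    rw [placeOpponent_update hqB] at D'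
    exact ⟨γ + 1, add_le_add_left hγ 1,
      mover (fun h => hnw ((wonBy_placeOpponent_iff fun p hp => (hB p hp).1).1 h))
        (placeOpponent_eq_none_iff.2 ⟨hqB, hq⟩) D'⟩
  | @opp c V hnw hV IH =>
    have hS : ∀ q, ∃ S : Finset (ℤ × ℤ), ∀ (hq : c q = none) (B : Finset (ℤ × ℤ)),
        (∀ p ∈ B, update c q (some !w) p = none ∧ p ∉ S) →
        ∃ γ ≤ V q hq, HexValAt w (placeOpponent w (update c q (some !w)) B) w γ := by
      intro q
      by_cases hq : c q = none
      · obtain ⟨S, hS⟩ := IH q hq (infinite_setOf_update_eq_none hc q _)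
        exact ⟨S, fun _ => hS⟩
      · exact ⟨∅, fun hq' => absurd hq' hq⟩
    choose S hS using hS
    obtain ⟨d, hd⟩ := hc.nonempty
    -- outside `core`, a move of the opponent is answered as the move at `d` would be
    set core := insert d (S d)
    refine ⟨core ∪ core.biUnion S, fun B hB => ?_⟩
    have hBc : ∀ p ∈ B, c p = none := fun p hp => (hB p hp).1
    have hBcore : ∀ p ∈ B, p ∉ core := fun p hp h => (hB p hp).2 (Finset.mem_union_left _ h)
    refine opp_of_forall_le (fun h => hnw ((wonBy_placeOpponent_iff hBc).1 h)) fun q hq => ?_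
    obtain ⟨hqB, hcq⟩ := placeOpponent_eq_none_iff.1 hq
    by_cases hqcore : q ∈ core
    · obtain ⟨γ, hγ, D'⟩ := hS q hcq B fun p hp => by
        have hpq : p ≠ q := by rintro rfl; exact hqB hp
        refine ⟨by simpa [hpq] using hBc p hp, fun h => (hB p hp).2 ?_⟩
        exact Finset.mem_union_right _ (Finset.mem_biUnion.2 ⟨q, hqcore, h⟩)
      rw [placeOpponent_update hqB] at D'
      exact ⟨γ, hγ.trans (le_sSup_values V q hcq), D'⟩
    · have hqd : q ≠ d := by rintro rfl; exact hqcore (Finset.mem_insert_self q _)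
      have hdB : d ∉ B := fun h => hBcore d h (Finset.mem_insert_self d _)
      obtain ⟨γ, hγ, D'⟩ := hS d hd (insert q B) fun p hp => by
        rcases Finset.mem_insert.1 hp with rfl | hp
        · exact ⟨by simpa [hqd] using hcq, fun h => hqcore (Finset.mem_insert_of_mem h)⟩
        · have hpd : p ≠ d := by rintro rfl; exact hdB hp
          exact ⟨by simpa [hpd] using hBc p hp,
            fun h => hBcore p hp (Finset.mem_insert_of_mem h)⟩
      rw [placeOpponent_update (by simp [Ne.symm hqd, hdB]), placeOpponent_insert] at D'
      obtain ⟨γ', hγ', D''⟩ := remove_opponent_stone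
        (by simpa [Ne.symm hqd] using placeOpponent_eq_none_iff.2 ⟨hdB, hd⟩)
        (infinite_setOf_update_eq_none (infinite_setOf_placeOpponent_eq_none hc B) q _) D'
      exact ⟨γ', hγ'.trans (hγ.trans (le_sSup_values V d hd)), D''⟩

lemma exists_nat_le {β : Ordinal.{u}} (D : HexValAt w c t β) :
    ∃ N : ℕ, ∃ γ ≤ (N : Ordinal.{u}), HexValAt w c t γ := by
  induction D with
  | won hW => exact ⟨0, 0, le_rfl, won hW⟩
  | mover hnw hq _ IH =>
    obtain ⟨N, γ, hγ, D'⟩ := IH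
    exact ⟨N + 1, γ + 1, by push_cast; exact add_le_add_left hγ 1, mover hnw hq D'⟩
  | @opp c V hnw _ IH =>
    suffices ∃ N : ℕ, ∀ q ∈ {q | c q = none}, ∃ n ≤ N,
        ∃ γ ≤ (n : Ordinal.{u}), HexValAt w (update c q (some !w)) w γ by
      obtain ⟨N, hN⟩ := this
      obtain ⟨γ, hγ, D⟩ := opp_of_forall_le (b := N) hnw fun q hq => by
        obtain ⟨n, hn, γ, hγ, D⟩ := hN q hq
        exact ⟨γ, hγ.trans (Nat.mono_cast hn), D⟩
      exact ⟨N, γ, hγ, D⟩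
    rcases Set.finite_or_infinite {q | c q = none} with hfin | hinf
    · exact exists_uniform_bound_of_finite_exceptions IH hfin (M := 0)
        fun q hq hq' => absurd hq hq'
    obtain ⟨d, hd⟩ := hinf.nonempty
    obtain ⟨N, γ, hγ, D⟩ := IH d hd
    obtain ⟨S, hS⟩ := exists_finite_support (infinite_setOf_update_eq_none hinf d _) D
    refine exists_uniform_bound_of_finite_exceptions IH (insert d S).finite_toSet (M := N)
      fun q hq hqE => ?_
    have hqd : q ≠ d := fun h => hqE (by simp [h])
    have hqS : q ∉ S := fun h => hqE (by simp [h])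
    obtain ⟨γ', hγ', D'⟩ := hS {q} (by simpa [hqd, hqS] using hq)
    rw [placeOpponent_singleton, update_comm (Ne.symm hqd)] at D'
    obtain ⟨γ'', hγ'', D''⟩ := remove_opponent_stone (by simpa [Ne.symm hqd] using hd)
      (infinite_setOf_update_eq_none hinf q _) D'
    exact ⟨N, le_rfl, γ'', hγ''.trans (hγ'.trans hγ), D''⟩

end HexValAt

/-- Only finite game values occur in infinite Hex: every position having a game value
for a player (Red or Blue) has a finite game value. -/
theorem infinite_hex_only_finite_game_values
    (w : Bool) (c : ℤ × ℤ → Option Bool) (t : Bool) (α : Ordinal)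
    (h : HexGameValue w c t α) : ∃ n : ℕ, α = (n : Ordinal) := by
  obtain ⟨N, γ, hγN, hγ⟩ := h.1.exists_nat_le
  exact Ordinal.lt_omega0.1 ((h.2 γ hγ).trans_lt (hγN.trans_lt (Ordinal.natCast_lt_omega0 N)))
end

section
/- In the 3-for-1 variation of infinite Hex, in which on each round Red places three stones on distinct empty cells and then Blue places one stone on an empty cell, Red has a winning strategy: a strategy such that in every infinite play consistent with it, Red fulfills the standard winning condition in the resulting coloring. -/
/-!
Red spends one stone per round on the first empty cell of a fixed enumeration of the board, so
every cell is eventually taken, and the other two on answering Blue's last stone in the band of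
the three central diagonals: a Blue diagonal stone `(n, n)` is answered by `(n ± 1, n ± 1)`, and a
Blue stone on a rail beside a Blue diagonal stone by the two cells of the opposite rail. A cell of
Red's answer to a Blue stone can be Blue only if Blue took it earlier, so two Blue stones cannot
lie in each other's answers. Hence Blue never holds two consecutive diagonal cells, nor cells on
both rails beside a Blue diagonal cell, and Red's diagonal, detouring along a red rail around
each Blue diagonal cell, is a red chain running off to infinity in both directions.
-/

open Function

theorem Int.exists_strictMono_range_eq {P : Set ℤ} (hup : ∀ n, ∃ m ∈ P, n < m)
    (hdown : ∀ n, ∃ m ∈ P, m < n) : ∃ e : ℤ → ℤ, StrictMono e ∧ Set.range e = P := by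
  classical
  let : SuccOrder P := LinearLocallyFiniteOrder.succOrder P
  let : PredOrder P := LinearLocallyFiniteOrder.predOrder P
  have : NoMaxOrder P := ⟨fun x => let ⟨m, hm, hxm⟩ := hup x; ⟨⟨m, hm⟩, hxm⟩⟩
  have : NoMinOrder P := ⟨fun x => let ⟨m, hm, hxm⟩ := hdown x; ⟨⟨m, hm⟩, hxm⟩⟩
  have : Nonempty P := let ⟨m, hm, _⟩ := hup 0; ⟨⟨m, hm⟩⟩
  let iso : ℤ ≃o P := orderIsoIntOfLinearSuccPredArch.symm
  refine ⟨fun k => iso k, fun k l hkl => iso.strictMono hkl, ?_⟩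
  ext m
  exact ⟨by rintro ⟨k, rfl⟩; exact (iso k).2, fun hm => ⟨iso.symm ⟨m, hm⟩, by simp⟩⟩

theorem StrictMono.apply_add_one_le {β : Type*} [LinearOrder β] {e : ℤ → β} (he : StrictMono e)
    {k : ℤ} {m : β} (hm : m ∈ Set.range e) (hlt : e k < m) : e (k + 1) ≤ m := by
  obtain ⟨j, rfl⟩ := hm
  exact he.monotone (Int.add_one_le_of_lt (he.lt_iff_lt.1 hlt))

theorem exists_chain_of_detours {α : Type*} (r : α → α → Prop) (U : Set ℤ) (a b : ℤ → α)
    (hstep : ∀ n ∉ U, r (a n) (a (n + 1)))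
    (hdetour : ∀ n ∈ U, r (a n) (b n) ∧ r (b n) (a (n + 1))) :
    ∃ f : ℤ → α, ∃ N : ℤ → ℤ, Monotone N ∧ Surjective N ∧
      (∀ k, f k = a (N k) ∨ f k = b (N k)) ∧ ∀ k, r (f k) (f (k + 1)) := by
  classical
  -- `2 * n` encodes `a n` and `2 * n + 1` encodes `b n`; the chain runs through the codes in `P`
  let g : ℤ → α := fun m => if m % 2 = 0 then a (m / 2) else b (m / 2)
  have hg₀ : ∀ n, g (2 * n) = a n := fun n => by simp [g]
  have hg₁ : ∀ n, g (2 * n + 1) = b n := fun n => by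
    simp only [g, if_neg (show (2 * n + 1) % 2 ≠ 0 by omega), show (2 * n + 1) / 2 = n by omega]
  let P : Set ℤ := {m | m % 2 = 0 ∨ m / 2 ∈ U}
  have hP₀ : ∀ n, 2 * n ∈ P := fun n => Or.inl (by omega)
  have hP₁ : ∀ n, 2 * n + 1 ∈ P ↔ n ∈ U := fun n => by
    simp [P, show (2 * n + 1) / 2 = n by omega]
  obtain ⟨e, he, hrange⟩ := Int.exists_strictMono_range_eq (P := P)
    (fun n => ⟨2 * (n / 2 + 1), hP₀ _, by omega⟩) (fun n => ⟨2 * (n / 2 - 1), hP₀ _, by omega⟩)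
  have hform : ∀ k, (∃ n, e k = 2 * n) ∨ ∃ n ∈ U, e k = 2 * n + 1 := fun k => by
    obtain ⟨n, hn | hn⟩ : ∃ n, e k = 2 * n ∨ e k = 2 * n + 1 := ⟨e k / 2, by omega⟩
    · exact Or.inl ⟨n, hn⟩
    · exact Or.inr ⟨n, (hP₁ n).1 (hn ▸ hrange ▸ Set.mem_range_self k), hn⟩
  refine ⟨g ∘ e, fun k => e k / 2, fun k l hkl => Int.ediv_le_ediv (by norm_num) (he.monotone hkl),
    fun n => ?_, fun k => ?_, fun k => ?_⟩
  · obtain ⟨k, hk⟩ := hrange ▸ hP₀ n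
    exact ⟨k, by simp [hk]⟩
  · rcases hform k with ⟨n, hn⟩ | ⟨n, -, hn⟩
    · exact Or.inl (by simp [hn, hg₀])
    · exact Or.inr (by simp [hn, hg₁, show (2 * n + 1) / 2 = n by omega])
  · have hnext : ∀ m ∈ P, e k < m → e k < e (k + 1) ∧ e (k + 1) ≤ m := fun m hm hlt =>
      ⟨he (lt_add_one k), he.apply_add_one_le (hrange ▸ hm) hlt⟩
    simp only [comp_apply]
    rcases hform k with ⟨n, hn⟩ | ⟨n, hnU, hn⟩
    · by_cases hU : n ∈ U
      · have h1 : e (k + 1) = 2 * n + 1 := by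
          have := hnext _ ((hP₁ n).2 hU) (by omega)
          omega
        simpa [hn, h1, hg₀, hg₁] using (hdetour n hU).1
      · have h1 : e (k + 1) = 2 * (n + 1) := by
          have := hnext _ (hP₀ (n + 1)) (by omega)
          rcases hform (k + 1) with ⟨n', hn'⟩ | ⟨n', hn'U, hn'⟩
          · omega
          · obtain rfl : n' = n := by omega
            exact absurd hn'U hU
        simpa [hn, h1, hg₀] using hstep n hU
    · have h1 : e (k + 1) = 2 * (n + 1) := by
        have := hnext _ (hP₀ (n + 1)) (by omega)
        omega
      simpa [hn, h1, hg₀, hg₁] using (hdetour n hnU).2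

theorem redConverges_of_near_diagonal {f : ℤ → ℤ × ℤ} {N : ℤ → ℤ} (hmono : Monotone N)
    (hsurj : Surjective N) (hnear : ∀ k, |(f k).1 - N k| ≤ 1 ∧ |(f k).2 - N k| ≤ 1) :
    RedConverges f := by
  intro a b
  obtain ⟨K, hK⟩ := hsurj (max a b + 2)
  obtain ⟨L, hL⟩ := hsurj (min a b - 2)
  refine ⟨(max K (-L)).toNat, fun n hn => ?_⟩
  have hup := hmono (show K ≤ n by omega)
  have hdown := hmono (show -(n : ℤ) ≤ L by omega)
  obtain ⟨h₁, h₂⟩ := hnear n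
  obtain ⟨h₃, h₄⟩ := hnear (-n)
  rw [abs_le] at h₁ h₂ h₃ h₄
  omega

/-- The two cells of the upper (`true`) or lower (`false`) rail beside the diagonal cell
`(n, n)`, in the order of a detour from `(n - 1, n - 1)` to `(n + 1, n + 1)`. -/
def railCells (n : ℤ) : Bool → (ℤ × ℤ) × (ℤ × ℤ)
  | true => ((n - 1, n), (n, n + 1))
  | false => ((n, n - 1), (n + 1, n))

theorem hexAdj_diag (n : ℤ) : HexAdj (n, n) (n + 1, n + 1) := by
  simp [HexAdj]

theorem hexAdj_diag_railCells_fst (n : ℤ) (s : Bool) : HexAdj (n - 1, n - 1) (railCells n s).1 := by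
  cases s <;> simp [HexAdj, railCells]

theorem hexAdj_railCells (n : ℤ) (s : Bool) : HexAdj (railCells n s).1 (railCells n s).2 := by
  cases s <;> simp [HexAdj, railCells]

theorem hexAdj_railCells_snd_diag (n : ℤ) (s : Bool) : HexAdj (railCells n s).2 (n + 1, n + 1) := by
  cases s <;> simp [HexAdj, railCells]

theorem redWinsStd_of_diagonal_detours (c : ℤ × ℤ → Option Bool)
    (hdiag : ∀ n, c (n, n) ≠ some true → c (n + 1, n + 1) = some true)
    (hrail : ∀ n, c (n, n) ≠ some true →
      ∃ s, c (railCells n s).1 = some true ∧ c (railCells n s).2 = some true) :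
    RedWinsStd c := by
  classical
  have hside : ∀ n, ∃ s, c (n, n) ≠ some true →
      c (railCells n s).1 = some true ∧ c (railCells n s).2 = some true := fun n => by
    by_cases h : c (n, n) = some true
    · exact ⟨true, fun h' => absurd h h'⟩
    · obtain ⟨s, hs⟩ := hrail n h
      exact ⟨s, fun _ => hs⟩
  choose s hs using hside
  let a : ℤ → ℤ × ℤ := fun n => if c (n, n) = some true then (n, n) else (railCells n (s n)).1
  let b : ℤ → ℤ × ℤ := fun n => (railCells n (s n)).2
  have ha_red : ∀ n, c (a n) = some true := fun n => by
    by_cases h : c (n, n) = some true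
    · simp [a, h]
    · simp [a, h, (hs n h).1]
  have hstep : ∀ n, c (n, n) = some true → HexAdj (a n) (a (n + 1)) := fun n hn => by
    by_cases h : c (n + 1, n + 1) = some true
    · simpa [a, hn, h] using hexAdj_diag n
    · simpa [a, hn, h] using hexAdj_diag_railCells_fst (n + 1) (s (n + 1))
  have hdetour : ∀ n, c (n, n) ≠ some true →
      HexAdj (a n) (b n) ∧ HexAdj (b n) (a (n + 1)) := fun n hn =>
    ⟨by simpa [a, hn] using hexAdj_railCells n (s n),
      by simpa [a, hdiag n hn] using hexAdj_railCells_snd_diag n (s n)⟩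
  have hrail_near : ∀ n s, |(railCells n s).1.1 - n| ≤ 1 ∧ |(railCells n s).1.2 - n| ≤ 1 ∧
      |(railCells n s).2.1 - n| ≤ 1 ∧ |(railCells n s).2.2 - n| ≤ 1 := fun n s => by
    cases s <;> simp [railCells]
  obtain ⟨f, N, hmono, hsurj, hf, hchain⟩ := exists_chain_of_detours
    (fun p q => HexAdj p q ∧ c p = some true) {n | c (n, n) ≠ some true} a b
    (fun n hn => ⟨hstep n (not_not.1 hn), ha_red n⟩)
    (fun n hn => ⟨⟨(hdetour n hn).1, ha_red n⟩, (hdetour n hn).2, (hs n hn).2⟩)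
  refine ⟨f, hchain, redConverges_of_near_diagonal hmono hsurj fun k => ?_⟩
  rcases hf k with hk | hk <;> rw [hk]
  · by_cases h : c (N k, N k) = some true
    · simp [a, h]
    · simpa [a, h] using And.intro (hrail_near (N k) (s (N k))).1 (hrail_near _ _).2.1
  · exact (hrail_near _ _).2.2

open Classical in
/-- Red's answer to a Blue stone at `(x, y)` when Blue holds the cells `B`: around a diagonal
stone, the two neighbouring diagonal cells; beside a rail stone, the opposite rail of a
Blue diagonal neighbour if there is one, and otherwise both diagonal neighbours. -/
noncomputable def reply (B : Set (ℤ × ℤ)) : ℤ × ℤ → (ℤ × ℤ) × (ℤ × ℤ)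
  | (x, y) =>
    if y = x then ((x - 1, x - 1), (x + 1, x + 1))
    else if y = x + 1 then
      if (x, x) ∈ B then railCells x false
      else if (y, y) ∈ B then railCells y false
      else ((x, x), (y, y))
    else if x = y + 1 then
      if (y, y) ∈ B then railCells y true
      else if (x, x) ∈ B then railCells x true
      else ((y, y), (x, x))
    else ((x, y), (x, y))

/-- `b j` is Blue's `j`-th stone and `R` the set of red cells. -/
structure RedAnswers (b : ℕ → ℤ × ℤ) (R : Set (ℤ × ℤ)) : Prop where
  injective : Injective b
  not_mem : ∀ j, b j ∉ R
  reply_mem : ∀ j q, (q = (reply (b '' Set.Iic j) (b j)).1 ∨ q = (reply (b '' Set.Iic j) (b j)).2) →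
    q ∈ R ∪ b '' Set.Iic j

namespace RedAnswers

variable {b : ℕ → ℤ × ℤ} {R : Set (ℤ × ℤ)}

theorem le_of_mem_reply (h : RedAnswers b R) {i j : ℕ}
    (hi : b i = (reply (b '' Set.Iic j) (b j)).1 ∨ b i = (reply (b '' Set.Iic j) (b j)).2) :
    i ≤ j := by
  rcases h.reply_mem j _ hi with hR | ⟨i', hi', he⟩
  · exact absurd hR (h.not_mem i)
  · exact h.injective he ▸ hi'

theorem not_diag_succ (h : RedAnswers b R) {i j : ℕ} {n : ℤ} (hi : b i = (n, n)) :
    b j ≠ (n + 1, n + 1) := by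
  intro hj
  have hji : j ≤ i := h.le_of_mem_reply (by simp [hi, hj, reply])
  have hij : i ≤ j := h.le_of_mem_reply (by simp [hi, hj, reply])
  have := h.injective.eq_iff.2 (le_antisymm hij hji)
  simp [hi, hj] at this

theorem diag_succ_mem (h : RedAnswers b R) {i : ℕ} {n : ℤ} (hi : b i = (n, n)) :
    (n + 1, n + 1) ∈ R := by
  rcases h.reply_mem i (n + 1, n + 1) (by simp [hi, reply]) with hR | ⟨j, -, hj⟩
  · exact hR
  · exact (h.not_diag_succ hi hj).elim

theorem reply_eq_railCells (h : RedAnswers b R) {i j : ℕ} {n : ℤ} {s : Bool} (hi : b i = (n, n))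
    (hj : b j = (railCells n s).1 ∨ b j = (railCells n s).2) :
    reply (b '' Set.Iic j) (b j) = railCells n (!s) := by
  have hpred : (n - 1, n - 1) ∉ b '' Set.Iic j := by
    rintro ⟨k, -, hk⟩
    exact h.not_diag_succ hk (by simpa using hi)
  have hsucc : (n + 1, n + 1) ∉ b '' Set.Iic j := by
    rintro ⟨k, -, hk⟩
    exact h.not_diag_succ hi hk
  have harith : n - 1 ≠ n + 1 ∧ n ≠ n + 1 + 1 ∧ n ≠ n - 1 := by omega
  have hdiag : (n, n) ∈ b '' Set.Iic j := by
    by_contra hn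
    refine hn ⟨i, h.le_of_mem_reply ?_, hi⟩
    cases s <;> rcases hj with hj | hj <;> simp [hj, hi, reply, railCells, hn, hpred, hsucc, harith]
  cases s <;> rcases hj with hj | hj <;> simp [hj, reply, railCells, hdiag, hpred, harith]

theorem mem_of_railCells (h : RedAnswers b R) {i j : ℕ} {n : ℤ} {s : Bool} (hi : b i = (n, n))
    (hj : b j = (railCells n s).1 ∨ b j = (railCells n s).2) {q : ℤ × ℤ}
    (hq : q = (railCells n (!s)).1 ∨ q = (railCells n (!s)).2) : q ∈ R := by
  rcases h.reply_mem j q (by rwa [h.reply_eq_railCells hi hj]) with hR | ⟨k, hkj, rfl⟩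
  · exact hR
  · have hjk : j ≤ k := h.le_of_mem_reply (by rwa [h.reply_eq_railCells hi hq, Bool.not_not])
    obtain rfl : k = j := le_antisymm hkj hjk
    cases s <;> rcases hj with hj | hj <;> rcases hq with hq | hq <;>
      simp [railCells, hj] at hq <;> omega

theorem diag_detour (h : RedAnswers b R) (hall : ∀ q ∉ R, ∃ j, b j = q) {n : ℤ}
    (hn : (n, n) ∉ R) :
    (n + 1, n + 1) ∈ R ∧ ∃ s, (railCells n s).1 ∈ R ∧ (railCells n s).2 ∈ R := by
  obtain ⟨i, hi⟩ := hall _ hn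
  refine ⟨h.diag_succ_mem hi, ?_⟩
  by_cases hup : (railCells n true).1 ∈ R ∧ (railCells n true).2 ∈ R
  · exact ⟨true, hup⟩
  obtain ⟨j, hj⟩ : ∃ j, b j = (railCells n true).1 ∨ b j = (railCells n true).2 := by
    rcases not_and_or.1 hup with hq | hq
    · exact (hall _ hq).imp fun _ => Or.inl
    · exact (hall _ hq).imp fun _ => Or.inr
  exact ⟨false, h.mem_of_railCells hi hj (Or.inl rfl), h.mem_of_railCells hi hj (Or.inr rfl)⟩

end RedAnswers

section FirstFree

variable {α : Type*} [Denumerable α] [DecidableEq α]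

theorem exists_ofNat_notMem (s : List α) : ∃ k, Denumerable.ofNat α k ∉ s := by
  obtain ⟨x, hx⟩ := Infinite.exists_notMem_finset s.toFinset
  exact ⟨Encodable.encode x, by simpa using hx⟩

def firstFree (s : List α) : α :=
  Denumerable.ofNat α (Nat.find (exists_ofNat_notMem s))

theorem firstFree_notMem (s : List α) : firstFree s ∉ s :=
  Nat.find_spec (exists_ofNat_notMem s)

theorem ofNat_mem_firstFree_cons {s : List α} {k : ℕ} (h : ∀ j < k, Denumerable.ofNat α j ∈ s) :
    Denumerable.ofNat α k ∈ firstFree s :: s := by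
  by_cases hk : Denumerable.ofNat α k ∈ s
  · exact List.mem_cons_of_mem _ hk
  have : Nat.find (exists_ofNat_notMem s) = k :=
    le_antisymm (Nat.find_le hk)
      (not_lt.1 fun hlt => Nat.find_spec (exists_ofNat_notMem s) (h _ hlt))
  simp [firstFree, this]

def claim (q : α) (s : List α) : α := if q ∈ s then firstFree s else q

theorem claim_notMem (q : α) (s : List α) : claim q s ∉ s := by
  unfold claim
  split_ifs with h
  exacts [firstFree_notMem s, h]

theorem mem_claim_cons (q : α) (s : List α) : q ∈ claim q s :: s := by
  unfold claim
  split_ifs with h <;> simp [h]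

end FirstFree

def blueStones (h : List (ℤ × ℤ)) : Set (ℤ × ℤ) := {q | ∃ i, i % 4 = 3 ∧ h[i]? = some q}

noncomputable def redStrategy (h : List (ℤ × ℤ)) : (ℤ × ℤ) × (ℤ × ℤ) × (ℤ × ℤ) :=
  -- on the empty board Red answers a fictitious Blue stone at the origin
  let t := reply (blueStones h) (h.getLastD (0, 0))
  let q₁ := claim t.1 h
  let q₂ := claim t.2 (q₁ :: h)
  (q₁, q₂, firstFree (q₂ :: q₁ :: h))

theorem redStrategy_legal (h : List (ℤ × ℤ)) :
    (redStrategy h).1 ∉ h ∧ (redStrategy h).2.1 ∉ h ∧ (redStrategy h).2.2 ∉ h ∧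
      (redStrategy h).1 ≠ (redStrategy h).2.1 ∧ (redStrategy h).1 ≠ (redStrategy h).2.2 ∧
      (redStrategy h).2.1 ≠ (redStrategy h).2.2 := by
  simp only [redStrategy]
  generalize reply (blueStones h) (h.getLastD (0, 0)) = t
  have h₁ := claim_notMem t.1 h
  have h₂ := claim_notMem t.2 (claim t.1 h :: h)
  have h₃ := firstFree_notMem (claim t.2 (claim t.1 h :: h) :: claim t.1 h :: h)
  simp only [List.mem_cons, not_or] at h₂ h₃
  exact ⟨h₁, h₂.2, h₃.2.2, Ne.symm h₂.1, Ne.symm h₃.2.1, Ne.symm h₃.1⟩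

theorem mem_redStrategy_of_reply (h : List (ℤ × ℤ)) {q : ℤ × ℤ}
    (hq : q = (reply (blueStones h) (h.getLastD (0, 0))).1 ∨
      q = (reply (blueStones h) (h.getLastD (0, 0))).2) :
    q = (redStrategy h).1 ∨ q = (redStrategy h).2.1 ∨ q ∈ h := by
  have h₁ := mem_claim_cons (reply (blueStones h) (h.getLastD (0, 0))).1 h
  have h₂ := mem_claim_cons (reply (blueStones h) (h.getLastD (0, 0))).2 ((redStrategy h).1 :: h)
  simp only [List.mem_cons] at h₁ h₂
  rcases hq with rfl | rfl
  · exact h₁.imp_right Or.inr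
  · rcases h₂ with e | e | e
    exacts [Or.inr (Or.inl e), Or.inl e, Or.inr (Or.inr e)]

theorem blueStones_map_range (p : ℕ → ℤ × ℤ) (j : ℕ) :
    blueStones ((List.range (4 * (j + 1))).map p) = (fun i => p (4 * i + 3)) '' Set.Iic j := by
  ext q
  simp only [blueStones, List.getElem?_eq_some_iff, List.length_map, List.length_range,
    List.getElem_map, List.getElem_range, Set.mem_image, Set.mem_Iic]
  constructor
  · rintro ⟨i, h3, hi, rfl⟩
    exact ⟨i / 4, by omega, by rw [show 4 * (i / 4) + 3 = i by omega]⟩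
  · rintro ⟨i, hi, rfl⟩
    exact ⟨4 * i + 3, by omega, by omega, rfl⟩

theorem getLastD_map_range (p : ℕ → ℤ × ℤ) (j : ℕ) :
    ((List.range (4 * (j + 1))).map p).getLastD (0, 0) = p (4 * j + 3) := by
  rw [show 4 * (j + 1) = 4 * j + 3 + 1 by ring, List.range_succ, List.map_append]
  exact List.getLastD_concat

/-- Blue's `k`-th stone is `p (4 * k + 3)`. -/
def IsPlayOf (σ : List (ℤ × ℤ) → (ℤ × ℤ) × (ℤ × ℤ) × (ℤ × ℤ)) (p : ℕ → ℤ × ℤ) : Prop :=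
  ∀ k : ℕ,
    p (4 * k) = (σ ((List.range (4 * k)).map p)).1 ∧
    p (4 * k + 1) = (σ ((List.range (4 * k)).map p)).2.1 ∧
    p (4 * k + 2) = (σ ((List.range (4 * k)).map p)).2.2

namespace IsPlayOf

variable {p : ℕ → ℤ × ℤ}

theorem ofNat_mem (hplay : IsPlayOf redStrategy p) (k : ℕ) :
    ∀ j < k, Denumerable.ofNat (ℤ × ℤ) j ∈ (List.range (4 * k)).map p := by
  induction k with
  | zero => simp
  | succ k ih =>
    have hmem : ∀ i < 4 * k + 3, p i ∈ (List.range (4 * (k + 1))).map p :=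
      fun i hi => List.mem_map_of_mem (List.mem_range.2 (by omega))
    intro j hj
    rcases Nat.lt_succ_iff_lt_or_eq.1 hj with hj | rfl
    · obtain ⟨i, hi, hpi⟩ := List.mem_map.1 (ih j hj)
      exact hpi ▸ hmem i (by simp at hi; omega)
    · set h := (List.range (4 * j)).map p
      have hnew :
          Denumerable.ofNat (ℤ × ℤ) j ∈ p (4 * j + 2) :: p (4 * j + 1) :: p (4 * j) :: h := by
        obtain ⟨h₀, h₁, h₂⟩ := hplay j
        rw [h₀, h₁, h₂]
        exact ofNat_mem_firstFree_cons
          fun i hi => List.mem_cons_of_mem _ (List.mem_cons_of_mem _ (ih i hi))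
      simp only [List.mem_cons] at hnew
      rcases hnew with he | he | he | he
      · exact he ▸ hmem _ (by omega)
      · exact he ▸ hmem _ (by omega)
      · exact he ▸ hmem _ (by omega)
      · obtain ⟨i, hi, hpi⟩ := List.mem_map.1 he
        exact hpi ▸ hmem i (by simp at hi; omega)

theorem exists_eq (hplay : IsPlayOf redStrategy p) (q : ℤ × ℤ) : ∃ i, p i = q := by
  obtain ⟨i, -, hi⟩ := List.mem_map.1 (hplay.ofNat_mem _ _ (Nat.lt_succ_self (Encodable.encode q)))
  exact ⟨i, hi.trans (Denumerable.ofNat_encode q)⟩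

theorem redAnswers (hp : Injective p) (hplay : IsPlayOf redStrategy p) {R : Set (ℤ × ℤ)}
    (hred : ∀ i, i % 4 ≠ 3 → p i ∈ R) (hblue : ∀ i, i % 4 = 3 → p i ∉ R) :
    RedAnswers (fun j => p (4 * j + 3)) R where
  injective i j hij := by have := hp hij; omega
  not_mem j := hblue _ (by omega)
  reply_mem j q hq := by
    rw [← getLastD_map_range p j, ← blueStones_map_range p j] at hq
    obtain ⟨i, hi, rfl⟩ : ∃ i < 4 * j + 6, p i = q := by
      obtain ⟨h₀, h₁, -⟩ := hplay (j + 1)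
      rcases mem_redStrategy_of_reply _ hq with he | he | he
      · exact ⟨_, by omega, h₀.trans he.symm⟩
      · exact ⟨_, by omega, h₁.trans he.symm⟩
      · obtain ⟨i, hi, hpi⟩ := List.mem_map.1 he
        exact ⟨i, by simp at hi; omega, hpi⟩
    by_cases h3 : i % 4 = 3
    · exact Or.inr ⟨i / 4, by simp; omega, by simp only; rw [show 4 * (i / 4) + 3 = i by omega]⟩
    · exact Or.inl (hred i h3)

end IsPlayOf

/-- In the 3-for-1 variation of infinite Hex (on each round Red places three stones on
distinct empty cells, then Blue places one stone on an empty cell), Red has a winning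
strategy: a strategy `σ`, choosing Red's three cells as a function of the finite history
of all stones placed so far, such that in every infinite play consistent with it Red
fulfills the standard winning condition in the resulting coloring. -/
theorem three_for_one_infinite_hex_red_wins :
    ∃ σ : List (ℤ × ℤ) → (ℤ × ℤ) × (ℤ × ℤ) × (ℤ × ℤ),
      (∀ h : List (ℤ × ℤ),
        (σ h).1 ∉ h ∧ (σ h).2.1 ∉ h ∧ (σ h).2.2 ∉ h ∧
        (σ h).1 ≠ (σ h).2.1 ∧ (σ h).1 ≠ (σ h).2.2 ∧ (σ h).2.1 ≠ (σ h).2.2) ∧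
      ∀ p : ℕ → ℤ × ℤ, Function.Injective p →
        (∀ k : ℕ,
          p (4 * k) = (σ ((List.range (4 * k)).map p)).1 ∧
          p (4 * k + 1) = (σ ((List.range (4 * k)).map p)).2.1 ∧
          p (4 * k + 2) = (σ ((List.range (4 * k)).map p)).2.2) →
        ∀ c : ℤ × ℤ → Option Bool,
          (∀ i : ℕ, i % 4 ≠ 3 → c (p i) = some true) →
          (∀ i : ℕ, i % 4 = 3 → c (p i) = some false) →
          (∀ q : ℤ × ℤ, (∀ i : ℕ, p i ≠ q) → c q = none) →
          RedWinsStd c := by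
  refine ⟨redStrategy, redStrategy_legal, fun p hp hplay c hred hblue _ => ?_⟩
  let R : Set (ℤ × ℤ) := {q | c q = some true}
  have hanswers : RedAnswers (fun j => p (4 * j + 3)) R :=
    IsPlayOf.redAnswers hp hplay hred fun i hi => by simp [R, hblue i hi]
  have hall : ∀ q ∉ R, ∃ j, p (4 * j + 3) = q := fun q hq => by
    obtain ⟨i, rfl⟩ := IsPlayOf.exists_eq hplay q
    have h3 : i % 4 = 3 := by_contra fun h3 => hq (hred i h3)
    exact ⟨i / 4, by rw [show 4 * (i / 4) + 3 = i by omega]⟩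
  exact redWinsStd_of_diagonal_detours c (fun n hn => (hanswers.diag_detour hall hn).1)
    fun n hn => (hanswers.diag_detour hall hn).2
end

section
/- The set of colorings of the infinite Hex board in which Red fulfills the standard winning condition is an analytic subset of the space of colorings equipped with the product topology. -/
/-- `Option Bool` carries the discrete topology. -/
instance : TopologicalSpace (Option Bool) := ⊥

/-!
The pairs `(c, f)` of a coloring and a chain witnessing Red's win form a Borel subset of the
Polish space `(ℤ × ℤ → Option Bool) × (ℤ → ℤ × ℤ)`: both conditions are countable Boolean
combinations of conditions on finitely many coordinates. The winning set is the projection of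
this Borel set to the first factor, hence analytic.
-/

instance : DiscreteTopology (Option Bool) := ⟨rfl⟩
instance : MeasurableSpace (Option Bool) := borel _
instance : BorelSpace (Option Bool) := ⟨rfl⟩

lemma measurable_isRedChain :
    Measurable fun p : (ℤ × ℤ → Option Bool) × (ℤ → ℤ × ℤ) => IsRedChain p.1 p.2 := by
  have hadj : Measurable fun r : (ℤ × ℤ) × (ℤ × ℤ) => HexAdj r.1 r.2 := measurable_of_countable _
  have heval : Measurable fun x : (ℤ × ℤ → Option Bool) × (ℤ × ℤ) => x.1 x.2 :=
    measurable_from_prod_countable_left fun q => measurable_pi_apply q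
  refine .forall fun n => .and ?_ ?_
  · exact hadj.comp (f := fun p : (ℤ × ℤ → Option Bool) × (ℤ → ℤ × ℤ) => (p.2 n, p.2 (n + 1)))
      (by fun_prop)
  · exact (heval.comp (f := fun p : (ℤ × ℤ → Option Bool) × (ℤ → ℤ × ℤ) => (p.1, p.2 n))
      (by fun_prop)).eq_const _

lemma measurable_redConverges : Measurable RedConverges := by
  unfold RedConverges
  fun_prop

/-- The set of colorings of the infinite Hex board in which Red fulfills the standard
winning condition is an analytic subset of the space of colorings, equipped with the
product topology (with `Option Bool` discrete). -/
theorem redWinsStd_analyticSet :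
    MeasureTheory.AnalyticSet {c : ℤ × ℤ → Option Bool | RedWinsStd c} := by
  have hS : MeasurableSet {p : (ℤ × ℤ → Option Bool) × (ℤ → ℤ × ℤ) |
      IsRedChain p.1 p.2 ∧ RedConverges p.2} :=
    (measurable_isRedChain.and (measurable_redConverges.comp measurable_snd)).setOf
  convert hS.analyticSet_image measurable_fst
  ext c
  simp [RedWinsStd]
end
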